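/- arXiv:2412.18184 — 5 statements merged into one kernel-verified Lean document; each statement's English description precedes it below -/
import Mathlib

section
/- If A and B are n×n positive semi-definite matrices with A ⪯ B (i.e., B − A is positive semi-definite), then the centered Gaussian N(0, A) is less than N(0, B) in the convex order. -/
/-!
Write `B = A + C` with `C = B - A ⪰ 0`. Then `N(0, B) = N(0, A) ∗ N(0, C)`, as both sides have
characteristic function `exp (-⟪t, (A + C) t⟫ / 2)`. Since `N(0, C)` is symmetric, convexity gives
`f x ≤ (f (x + y) + f (x - y)) / 2`, so `f x ≤ ∫ f (x + y) dN(0, C)(y)`; integrating in `x`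
against `N(0, A)` yields `∫ f dN(0, A) ≤ ∫ f dN(0, B)`.
-/

open MeasureTheory ProbabilityTheory Real

noncomputable section

/-- Convex order between two laws on `Fin n → ℝ`. -/
def ConvexOrder {n : ℕ} (μ ν : Measure (Fin n → ℝ)) : Prop :=
  ∀ f : (Fin n → ℝ) → ℝ, ConvexOn ℝ Set.univ f →
    Integrable f μ → Integrable f ν →
    ∫ x, f x ∂μ ≤ ∫ x, f x ∂ν

/-- Standard Gaussian on `Fin n → ℝ` (iid standard normal coordinates). -/
def stdGaussianPi (n : ℕ) : Measure (Fin n → ℝ) :=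
  Measure.pi fun _ => gaussianReal 0 1

/-- The Gaussian `N(m, A Aᵀ)` on `ℝⁿ`, realized as the law of `m + A g` with `g`
standard Gaussian. -/
def gaussianVec {n : ℕ} (m : Fin n → ℝ) (A : Matrix (Fin n) (Fin n) ℝ) :
    Measure (Fin n → ℝ) :=
  (stdGaussianPi n).map fun x => m + A.mulVec x

section ConvexConv

variable {E : Type*} [AddCommGroup E] [Module ℝ E] [MeasurableSpace E] {f : E → ℝ}

theorem ConvexOn.le_integral_add_of_measurePreserving_neg [MeasurableNeg E]
    (hf : ConvexOn ℝ Set.univ f) {ν : Measure E} [IsProbabilityMeasure ν]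
    (hν : MeasurePreserving Neg.neg ν ν) (x : E) (hfx : Integrable (fun y ↦ f (x + y)) ν) :
    f x ≤ ∫ y, f (x + y) ∂ν := by
  have hneg : MeasurePreserving (MeasurableEquiv.neg E) ν ν := hν
  have hfx' : Integrable (fun y ↦ f (x + -y)) ν :=
    (hneg.integrable_comp_emb (MeasurableEquiv.neg E).measurableEmbedding).mpr hfx
  have hmid (y : E) : f x ≤ 2⁻¹ * f (x + y) + 2⁻¹ * f (x + -y) := by
    have hx : (2⁻¹ : ℝ) • (x + y) + (2⁻¹ : ℝ) • (x + -y) = x := by module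
    simpa only [hx, smul_eq_mul] using hf.2 (Set.mem_univ (x + y)) (Set.mem_univ (x + -y))
      (by norm_num : (0 : ℝ) ≤ 2⁻¹) (by norm_num : (0 : ℝ) ≤ 2⁻¹) (by norm_num)
  have hsymm : ∫ y, f (x + -y) ∂ν = ∫ y, f (x + y) ∂ν :=
    hneg.integral_comp' fun y ↦ f (x + y)
  calc f x = ∫ _, f x ∂ν := by simp
    _ ≤ ∫ y, 2⁻¹ * f (x + y) + 2⁻¹ * f (x + -y) ∂ν :=
      integral_mono (integrable_const _) ((hfx.const_mul _).add (hfx'.const_mul _)) hmid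
    _ = 2⁻¹ * ∫ y, f (x + y) ∂ν + 2⁻¹ * ∫ y, f (x + -y) ∂ν := by
      rw [integral_add (hfx.const_mul _) (hfx'.const_mul _), integral_const_mul,
        integral_const_mul]
    _ = ∫ y, f (x + y) ∂ν := by
      rw [hsymm]
      ring

theorem ConvexOn.integral_le_integral_conv [MeasurableNeg E] [MeasurableAdd₂ E]
    (hf : ConvexOn ℝ Set.univ f) {μ ν : Measure E} [SFinite μ] [IsProbabilityMeasure ν]
    (hν : MeasurePreserving Neg.neg ν ν) (hfμ : Integrable f μ) (hfμν : Integrable f (μ ∗ ν)) :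
    ∫ x, f x ∂μ ≤ ∫ x, f x ∂(μ ∗ ν) := by
  have hprod : Integrable (fun p : E × E ↦ f (p.1 + p.2)) (μ.prod ν) :=
    (integrable_map_measure hfμν.1 (by fun_prop)).mp hfμν
  rw [integral_conv hfμν]
  refine integral_mono_ae hfμ hprod.integral_prod_left ?_
  filter_upwards [hprod.prod_right_ae] with x hx
  exact hf.le_integral_add_of_measurePreserving_neg hν x hx

end ConvexConv

section Gaussian

open Matrix WithLp Complex
open scoped RealInnerProductSpace

lemma charFun_map_stdGaussian {E F : Type*} [NormedAddCommGroup E] [InnerProductSpace ℝ E]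
    [FiniteDimensional ℝ E] [MeasurableSpace E] [BorelSpace E]
    [NormedAddCommGroup F] [InnerProductSpace ℝ F] [CompleteSpace F] [MeasurableSpace F]
    [BorelSpace F] (L : E →L[ℝ] F) (t : F) :
    charFun ((stdGaussian E).map L) t = Complex.exp (-‖L.adjoint t‖ ^ 2 / 2) := by
  rw [charFun_apply, integral_map L.measurable.aemeasurable (by fun_prop), ← charFun_stdGaussian,
    charFun_apply]
  simp_rw [← L.adjoint_inner_right]

variable {ι : Type*} [Fintype ι] [DecidableEq ι]

lemma map_add_toEuclideanCLM_stdGaussian (μ : EuclideanSpace ℝ ι) (M : Matrix ι ι ℝ) :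
    (stdGaussian (EuclideanSpace ℝ ι)).map (fun x ↦ μ + toEuclideanCLM (𝕜 := ℝ) M x) =
      multivariateGaussian μ (M * Mᵀ) := by
  have hM : (M * Mᵀ).PosSemidef := by
    simpa using posSemidef_self_mul_conjTranspose M
  have hadj : (toEuclideanCLM (𝕜 := ℝ) M).adjoint = toEuclideanCLM (𝕜 := ℝ) Mᵀ := by
    rw [← conjTranspose_eq_transpose_of_trivial, ← star_eq_conjTranspose, map_star]
    rfl
  have hnorm (t : EuclideanSpace ℝ ι) :
      ‖(toEuclideanCLM (𝕜 := ℝ) M).adjoint t‖ ^ 2 = t ⬝ᵥ (M * Mᵀ) *ᵥ t := by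
    rw [← real_inner_self_eq_norm_sq, ContinuousLinearMap.adjoint_inner_left, hadj,
      ← ContinuousLinearMap.comp_apply, ← ContinuousLinearMap.mul_def, ← map_mul,
      inner_toEuclideanCLM]
  rw [show (fun x ↦ μ + toEuclideanCLM (𝕜 := ℝ) M x) = (μ + ·) ∘ toEuclideanCLM (𝕜 := ℝ) M
    from rfl, ← Measure.map_map (measurable_const_add μ) (by fun_prop)]
  refine Measure.ext_of_charFun (funext fun t ↦ ?_)
  rw [charFun_map_const_add, charFun_map_stdGaussian, charFun_multivariateGaussian hM,
    ← ofReal_pow, hnorm, ← Complex.exp_add, real_inner_comm]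
  ring_nf

lemma multivariateGaussian_conv_multivariateGaussian {μ₁ μ₂ : EuclideanSpace ℝ ι}
    {S₁ S₂ : Matrix ι ι ℝ} (h₁ : S₁.PosSemidef) (h₂ : S₂.PosSemidef) :
    multivariateGaussian μ₁ S₁ ∗ multivariateGaussian μ₂ S₂ =
      multivariateGaussian (μ₁ + μ₂) (S₁ + S₂) := by
  refine Measure.ext_of_charFun (funext fun t ↦ ?_)
  rw [charFun_conv, charFun_multivariateGaussian h₁, charFun_multivariateGaussian h₂,
    charFun_multivariateGaussian (h₁.add h₂), ← Complex.exp_add, inner_add_right, add_mulVec,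
    dotProduct_add]
  push_cast
  ring_nf

lemma multivariateGaussian_map_neg (μ : EuclideanSpace ℝ ι) (S : Matrix ι ι ℝ) :
    (multivariateGaussian μ S).map Neg.neg = multivariateGaussian (-μ) S := by
  by_cases hS : S.PosSemidef
  · refine Measure.ext_of_charFun (funext fun t ↦ ?_)
    have hneg := charFun_map_smul (μ := multivariateGaussian μ S) (-1) t
    simp only [neg_one_smul] at hneg
    rw [hneg, charFun_multivariateGaussian hS, charFun_multivariateGaussian hS]
    simp [inner_neg_left, mulVec_neg]
  · rw [multivariateGaussian_of_not_posSemidef _ hS, multivariateGaussian_of_not_posSemidef _ hS,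
      Measure.map_dirac]

lemma measurePreserving_neg_multivariateGaussian_zero (S : Matrix ι ι ℝ) :
    MeasurePreserving Neg.neg (multivariateGaussian 0 S) (multivariateGaussian 0 S) :=
  ⟨measurable_neg, by rw [multivariateGaussian_map_neg, neg_zero]⟩

lemma gaussianVec_eq_map_multivariateGaussian {n : ℕ} (m : Fin n → ℝ)
    (M : Matrix (Fin n) (Fin n) ℝ) :
    gaussianVec m M = (multivariateGaussian (toLp 2 m) (M * Mᵀ)).map ofLp := by
  rw [← map_add_toEuclideanCLM_stdGaussian, ← map_pi_eq_stdGaussian,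
    Measure.map_map (by fun_prop) (by fun_prop), Measure.map_map (by fun_prop) (by fun_prop)]
  rfl

end Gaussian

theorem gaussian_convexOrder_of_posSemidef_le_general {n : ℕ}
    (A B R S : Matrix (Fin n) (Fin n) ℝ)
    (hA : A.PosSemidef) (hAB : (B - A).PosSemidef)
    (hR : R * R.transpose = A) (hS : S * S.transpose = B) :
    ConvexOrder (gaussianVec 0 R) (gaussianVec 0 S) := by
  intro f hf hfR hfS
  have hconv : multivariateGaussian 0 A ∗ multivariateGaussian 0 (B - A) =
      multivariateGaussian 0 B := by
    simpa using multivariateGaussian_conv_multivariateGaussian (μ₁ := 0) (μ₂ := 0) hA hAB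
  have hofLp : MeasurableEmbedding (WithLp.ofLp : EuclideanSpace ℝ (Fin n) → Fin n → ℝ) :=
    (MeasurableEquiv.toLp 2 (Fin n → ℝ)).symm.measurableEmbedding
  simp only [gaussianVec_eq_map_multivariateGaussian, WithLp.toLp_zero, hR, hS, ← hconv,
    hofLp.integrable_map_iff, hofLp.integral_map] at hfR hfS ⊢
  have hf' := hf.comp_linearMap (WithLp.linearEquiv 2 ℝ (Fin n → ℝ)).toLinearMap
  exact hf'.integral_le_integral_conv (measurePreserving_neg_multivariateGaussian_zero _) hfR hfS

/-- If `A ⪯ B` are positive semidefinite `n × n` matrices, then `N(0, A) ≺_cx N(0, B)`.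
(The Gaussians are presented via square-root factorizations `A = R Rᵀ`, `B = S Sᵀ`.) -/
theorem gaussian_convexOrder_of_posSemidef_le {n : ℕ}
    (A B R S : Matrix (Fin n) (Fin n) ℝ)
    (hA : A.PosSemidef) (hB : B.PosSemidef) (hAB : (B - A).PosSemidef)
    (hR : R * R.transpose = A) (hS : S * S.transpose = B) :
    ConvexOrder (gaussianVec 0 R) (gaussianVec 0 S) :=
  gaussian_convexOrder_of_posSemidef_le_general A B R S hA hAB hR hS
end
end

section
/- Let X be a real-valued random variable with E[X] = 0 and |X| ≤ C almost surely. Then X ≺_cx N(0, πC²/2), i.e., for every convex function f : ℝ → ℝ for which the expectations exist, E[f(X)] ≤ E[f(G)] where G ∼ N(0, πC²/2). -/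
open MeasureTheory ProbabilityTheory Real

noncomputable section

/-- Convex order between two laws on `ℝ`. -/
def ConvexOrderReal (μ ν : Measure ℝ) : Prop :=
  ∀ f : ℝ → ℝ, ConvexOn ℝ Set.univ f →
    Integrable f μ → Integrable f ν →
    ∫ x, f x ∂μ ≤ ∫ x, f x ∂ν

/-!
A convex function lies below its chord over `[-C, C]`, so for `E X = 0` this gives
`E f(X) ≤ (f C + f (-C)) / 2` (the Edmundson–Madansky bound). On the Gaussian side, the
symmetrization `g x = f x + f (-x)` is even and convex, so Jensen's inequality for `|G|` gives
`g (E |G|) ≤ E g(|G|) = 2 E f(G)`. The variance `π C² / 2` is exactly the one for which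
`E |G| = √(2 σ² / π) = C`.
-/

open Set
open scoped NNReal

theorem ConvexOn.sub_mul_le_of_mem_Icc {𝕜 : Type*} [Field 𝕜] [LinearOrder 𝕜]
    [IsStrictOrderedRing 𝕜] {f : 𝕜 → 𝕜} {a b x : 𝕜} (hf : ConvexOn 𝕜 (Icc a b) f)
    (hx : x ∈ Icc a b) : (b - a) * f x ≤ (b - x) * f a + (x - a) * f b := by
  rcases hx.1.eq_or_lt with rfl | hax
  · simp
  rcases hx.2.eq_or_lt with rfl | hxb
  · simp
  exact hf.secant_mono_aux1 (left_mem_Icc.2 (hax.trans hxb).le)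
    (right_mem_Icc.2 (hax.trans hxb).le) hax hxb

theorem ConvexOn.sub_mul_integral_le_of_ae_mem_Icc {ν : Measure ℝ} [IsProbabilityMeasure ν]
    {f : ℝ → ℝ} {a b : ℝ} (hf : ConvexOn ℝ (Icc a b) f) (hfi : Integrable f ν)
    (hν : ∀ᵐ x ∂ν, x ∈ Icc a b) :
    (b - a) * ∫ x, f x ∂ν ≤ (b - ∫ x, x ∂ν) * f a + (∫ x, x ∂ν - a) * f b := by
  have hid : Integrable (fun x => x) ν := by
    refine Integrable.of_bound aestronglyMeasurable_id (max |a| |b|) ?_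
    filter_upwards [hν] with x hx using abs_le_max_abs_abs hx.1 hx.2
  calc (b - a) * ∫ x, f x ∂ν = ∫ x, (b - a) * f x ∂ν := (integral_const_mul _ _).symm
    _ ≤ ∫ x, (b * f a - a * f b) + (f b - f a) * x ∂ν := by
      refine integral_mono_ae (hfi.const_mul _) ((integrable_const _).add (hid.const_mul _)) ?_
      filter_upwards [hν] with x hx
      linarith [hf.sub_mul_le_of_mem_Icc hx]
    _ = (b - ∫ x, x ∂ν) * f a + (∫ x, x ∂ν - a) * f b := by
      rw [integral_add (integrable_const _) (hid.const_mul _), integral_const, integral_const_mul]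
      simp only [probReal_univ, one_smul]
      ring

theorem ConvexOn.map_integral_abs_add_map_neg_le {ν : Measure ℝ} [IsProbabilityMeasure ν]
    [ν.IsNegInvariant] {f : ℝ → ℝ} (hf : ConvexOn ℝ univ f) (hfi : Integrable f ν)
    (hid : Integrable (fun x => x) ν) :
    f (∫ x, |x| ∂ν) + f (-∫ x, |x| ∂ν) ≤ 2 * ∫ x, f x ∂ν := by
  set g : ℝ → ℝ := fun x => f x + f (-x)
  have hg : ConvexOn ℝ univ g := hf.add (hf.comp_linearMap (-LinearMap.id))
  have hgi : Integrable g ν := hfi.add hfi.comp_neg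
  have hg_abs : ∀ x, g |x| = g x := by
    intro x
    rcases abs_choice x with h | h <;> simp only [g, h, neg_neg, add_comm]
  calc g (∫ x, |x| ∂ν) ≤ ∫ x, g |x| ∂ν :=
        hg.map_integral_le (hg.continuousOn isOpen_univ) isClosed_univ (by simp) hid.abs
          (by simpa only [Function.comp_def, hg_abs] using hgi)
    _ = ∫ x, g x ∂ν := by simp_rw [hg_abs]
    _ = 2 * ∫ x, f x ∂ν := by
        rw [integral_add hfi hfi.comp_neg, integral_neg_eq_self]
        ring

theorem integral_mul_exp_neg_mul_sq {b : ℝ} (hb : 0 < b) :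
    ∫ x in Ioi (0 : ℝ), x * rexp (-b * x ^ 2) = (2 * b)⁻¹ := by
  simpa [Real.Gamma_one, Real.rpow_neg_one, mul_comm] using
    integral_rpow_mul_exp_neg_mul_rpow (p := 2) (q := 1) two_pos (by norm_num) hb

instance isNegInvariant_gaussianReal (v : ℝ≥0) : (gaussianReal 0 v).IsNegInvariant where
  neg_eq_self := by simpa [Measure.neg_def] using gaussianReal_map_neg (μ := 0) (v := v)

theorem integral_abs_gaussianReal (v : ℝ≥0) : ∫ x, |x| ∂gaussianReal 0 v = √(2 * v / π) := by
  rcases eq_or_ne v 0 with rfl | hv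
  · simp [gaussianReal_zero_var]
  have hv' : (0 : ℝ) < v := by positivity
  calc ∫ x, |x| ∂gaussianReal 0 v = ∫ x, gaussianPDFReal 0 v |x| * |x| := by
        rw [integral_gaussianReal_eq_integral_smul hv]
        simp [gaussianPDFReal, sq_abs]
    _ = 2 * ((√(2 * π * v))⁻¹ * ∫ x in Ioi (0 : ℝ), x * rexp (-(2 * (v : ℝ))⁻¹ * x ^ 2)) := by
        rw [integral_comp_abs (f := fun t => gaussianPDFReal 0 v t * t)]
        congr 1
        rw [← integral_const_mul]
        refine setIntegral_congr_fun (measurableSet_Ioi (a := (0 : ℝ))) fun x _ => ?_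
        simp only [gaussianPDFReal, sub_zero]
        ring_nf
    _ = √(2 * v / π) := by
        rw [integral_mul_exp_neg_mul_sq (by positivity), eq_comm,
          sqrt_eq_iff_eq_sq (by positivity) (by positivity)]
        field_simp
        rw [sq_sqrt (by positivity)]

/-- If `X` is a real random variable with `E[X] = 0` and `|X| ≤ C` a.s., then
`X ≺_cx N(0, πC²/2)`. -/
theorem convexOrder_gaussian_of_bounded {Ω : Type*} [MeasurableSpace Ω]
    (μ : Measure Ω) [IsProbabilityMeasure μ] (X : Ω → ℝ) (hX : Measurable X)
    (C : ℝ) (hC : 0 < C)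
    (hmean : ∫ ω, X ω ∂μ = 0)
    (hbdd : ∀ᵐ ω ∂μ, |X ω| ≤ C) :
    ConvexOrderReal (μ.map X) (gaussianReal 0 (Real.toNNReal (π * C ^ 2 / 2))) := by
  intro f hf hfX hfG
  have := Measure.isProbabilityMeasure_map (μ := μ) hX.aemeasurable
  have hlaw_mem : ∀ᵐ x ∂μ.map X, x ∈ Icc (-C) C := by
    refine (ae_map_iff hX.aemeasurable measurableSet_Icc).2 ?_
    filter_upwards [hbdd] with ω hω using abs_le.1 hω
  have hlaw_mean : ∫ x, x ∂μ.map X = 0 := by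
    rwa [integral_map hX.aemeasurable (by fun_prop)]
  have hgauss_abs : ∫ x, |x| ∂gaussianReal 0 (π * C ^ 2 / 2).toNNReal = C := by
    rw [integral_abs_gaussianReal, coe_toNNReal _ (by positivity),
      show 2 * (π * C ^ 2 / 2) / π = C ^ 2 by field_simp]
    exact sqrt_sq hC.le
  have hupper := (hf.subset (subset_univ _) (convex_Icc _ _)).sub_mul_integral_le_of_ae_mem_Icc
    hfX hlaw_mem
  have hlower := hf.map_integral_abs_add_map_neg_le hfG
    (memLp_one_iff_integrable.1 (memLp_id_gaussianReal 1))
  rw [hlaw_mean] at hupper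
  rw [hgauss_abs] at hlower
  have : C * ∫ x, f x ∂μ.map X ≤ C * ∫ x, f x ∂gaussianReal 0 (π * C ^ 2 / 2).toNNReal := by
    linarith [mul_le_mul_of_nonneg_left hlower hC.le]
  exact le_of_mul_le_mul_left this hC
end
end

section
/- Fix C ≥ 1, M > 0, and vectors X₁,…,X_N ∈ ℝᵐ (all nonzero). Define β₀ = 0 and, for t ≥ 1, β_t = (CπM²/2)·max_{1≤i≤t}‖X_i‖². Define Σ₀ = 0 and recursively Σ_t = (I − P_{X_t}/C) Σ_{t−1} (I − P_{X_t}/C) + (πM²/2) X_t X_tᵀ, where P_{X_t} = X_t X_tᵀ/‖X_t‖² is the orthogonal projection onto span(X_t). Then Σ_t ⪯ β_t I for all 0 ≤ t ≤ N. -/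
/-!
Write `Q = I - P/C` with `P` the orthogonal projection onto `X_t`. Since
`Q² = (I - P) + (1 - 1/C)² P` and `X_t X_tᵀ = ‖X_t‖² P`, the induction hypothesis
`Σ_{t-1} ⪯ β_{t-1} I` gives
`β_t I - Σ_t ⪰ (β_t - β_{t-1})(I - P) + (β_t - β_{t-1}(1 - 1/C)² - (πM²/2)‖X_t‖²) P`.
Both coefficients are nonnegative: `β` is nondecreasing and `(πM²/2) ‖X_t‖² ≤ β_t / C`,
so the second one is at least `β_t (1 - (1 - 1/C)² - 1/C) = β_t (1/C - 1/C²) ≥ 0`.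
-/

open Matrix Real
open scoped ComplexOrder

namespace Matrix
variable {n 𝕜 : Type*} [Fintype n] [RCLike 𝕜]

theorem IsStarProjection.posSemidef {P : Matrix n n 𝕜} (hP : IsStarProjection P) :
    P.PosSemidef := by
  have h : P = Pᴴ * P := by rw [show Pᴴ = P from hP.isSelfAdjoint, hP.isIdempotentElem.eq]
  rw [h]
  exact posSemidef_conjTranspose_mul_self P

theorem IsStarProjection.one_sub_smul_mul_self [DecidableEq n] {P : Matrix n n 𝕜}
    (hP : IsStarProjection P) (s : ℝ) :
    (1 - s • P) * (1 - s • P) = (1 - P) + (1 - s) ^ 2 • P := by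
  simp only [sub_mul, mul_sub, mul_one, one_mul, smul_mul_assoc, mul_smul_comm,
    hP.isIdempotentElem.eq]
  module

theorem IsStarProjection.posSemidef_smul_one_sub_conj_add_smul [DecidableEq n]
    {P S : Matrix n n 𝕜} (hP : IsStarProjection P) {a b s k : ℝ}
    (hS : (a • 1 - S).PosSemidef) (hab : a ≤ b) (hk : a * (1 - s) ^ 2 + k ≤ b) :
    (b • 1 - ((1 - s • P) * S * (1 - s • P) + k • P)).PosSemidef := by
  set Q := 1 - s • P
  have hQ : Qᴴ = Q := (IsSelfAdjoint.one _).sub ((IsSelfAdjoint.all s).smul hP.isSelfAdjoint)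
  have hQQ : Q * Q = (1 - P) + (1 - s) ^ 2 • P := hP.one_sub_smul_mul_self s
  clear_value Q
  have hconj : (Q * (a • 1 - S) * Q).PosSemidef := by
    simpa only [hQ] using hS.mul_mul_conjTranspose_same Q
  have hdecomp : b • 1 - (Q * S * Q + k • P) = Q * (a • 1 - S) * Q
      + ((b - a) • (1 - P) + (b - (a * (1 - s) ^ 2 + k)) • P) := by
    rw [mul_sub, sub_mul, mul_smul_comm, mul_one, smul_mul_assoc, hQQ]
    module
  rw [hdecomp]
  exact hconj.add (((hP.one_sub.posSemidef).smul (sub_nonneg.2 hab)).add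
    (hP.posSemidef.smul (sub_nonneg.2 hk)))

end Matrix

theorem isStarProjection_inv_sum_sq_smul_vecMulVec {n : Type*} [Fintype n] (v : n → ℝ) :
    IsStarProjection ((∑ j, v j ^ 2)⁻¹ • vecMulVec v v) := by
  have hVV : vecMulVec v v * vecMulVec v v = (∑ j, v j ^ 2) • vecMulVec v v := by
    simp [vecMulVec_mul_vecMulVec, vecMulVec_smul, dotProduct, sq]
  refine ⟨?_, ?_⟩
  · simp only [IsIdempotentElem, smul_mul_smul_comm, hVV, smul_smul]
    congr 1
    field_simp
  · exact (IsSelfAdjoint.all _).smul (by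
      simp [IsSelfAdjoint, star_eq_conjTranspose])

theorem vecMulVec_self_eq_sum_sq_smul {n : Type*} [Fintype n] (v : n → ℝ) :
    vecMulVec v v = (∑ j, v j ^ 2) • (∑ j, v j ^ 2)⁻¹ • vecMulVec v v := by
  rcases eq_or_ne v 0 with rfl | hv
  · simp
  · rw [smul_inv_smul₀]
    have : v ⬝ᵥ v ≠ 0 := dotProduct_self_eq_zero.not.2 hv
    simpa [dotProduct, sq] using this

theorem mul_one_sub_inv_sq_add_le {C a b c : ℝ} (hC : 1 ≤ C) (ha : 0 ≤ a) (hab : a ≤ b)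
    (hc : C * c ≤ b) : a * (1 - C⁻¹) ^ 2 + c ≤ b := by
  have hC0 : 0 < C := by linarith
  have hc' : c ≤ C⁻¹ * b := by rw [le_inv_mul_iff₀ hC0]; exact hc
  have hu : C⁻¹ ^ 2 ≤ C⁻¹ :=
    pow_le_of_le_one (by positivity) (inv_le_one_of_one_le₀ hC) two_ne_zero
  nlinarith [mul_le_mul_of_nonneg_right hab (sq_nonneg (1 - C⁻¹))]

section RunningMax

variable {N : ℕ} {κ : ℝ} {f β : ℕ → ℝ}
  (hβ : ∀ t (ht : 1 ≤ t), t ≤ N →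
    β t = κ * (Finset.Icc 1 t).sup' (Finset.nonempty_Icc.mpr ht) f)
include hβ

theorem mul_le_of_eq_mul_sup'_Icc (hκ : 0 ≤ κ) {t : ℕ} (ht : 1 ≤ t) (htN : t ≤ N) :
    κ * f t ≤ β t := by
  rw [hβ t ht htN]
  exact mul_le_mul_of_nonneg_left (Finset.le_sup' f (Finset.mem_Icc.2 ⟨ht, le_rfl⟩)) hκ

theorem nonneg_of_eq_mul_sup'_Icc (hκ : 0 ≤ κ) (hf : ∀ i, 0 ≤ f i) (hβ0 : β 0 = 0)
    {t : ℕ} (htN : t ≤ N) : 0 ≤ β t := by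
  rcases Nat.eq_zero_or_pos t with rfl | ht
  · exact hβ0.ge
  · exact (mul_nonneg hκ (hf t)).trans (mul_le_of_eq_mul_sup'_Icc hβ hκ ht htN)

theorem le_succ_of_eq_mul_sup'_Icc (hκ : 0 ≤ κ) (hf : ∀ i, 0 ≤ f i) (hβ0 : β 0 = 0)
    {t : ℕ} (htN : t + 1 ≤ N) : β t ≤ β (t + 1) := by
  rcases Nat.eq_zero_or_pos t with rfl | ht
  · exact hβ0 ▸ nonneg_of_eq_mul_sup'_Icc hβ hκ hf hβ0 htN
  · rw [hβ t ht (by omega), hβ (t + 1) (by omega) htN]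
    exact mul_le_mul_of_nonneg_left
      (Finset.sup'_mono f (Finset.Icc_subset_Icc_right t.le_succ) _) hκ

end RunningMax

theorem covariance_recursion_bound_general {d N : ℕ} (C M : ℝ) (hC : 1 ≤ C)
    (X : ℕ → Fin d → ℝ)
    (β : ℕ → ℝ) (hβ0 : β 0 = 0)
    (hβ : ∀ t (ht : 1 ≤ t), t ≤ N →
      β t = C * π * M ^ 2 / 2 *
        (Finset.Icc 1 t).sup' (Finset.nonempty_Icc.mpr ht) (fun i => ∑ j, X i j ^ 2))
    (P : ℕ → Matrix (Fin d) (Fin d) ℝ)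
    (hP : ∀ t, P t = (∑ j, X t j ^ 2)⁻¹ • Matrix.vecMulVec (X t) (X t))
    (Sig : ℕ → Matrix (Fin d) (Fin d) ℝ) (hSig0 : Sig 0 = 0)
    (hSig : ∀ t, 1 ≤ t → t ≤ N →
      Sig t = (1 - C⁻¹ • P t) * Sig (t - 1) * (1 - C⁻¹ • P t)
        + (π * M ^ 2 / 2) • Matrix.vecMulVec (X t) (X t)) :
    ∀ t ≤ N, (β t • (1 : Matrix (Fin d) (Fin d) ℝ) - Sig t).PosSemidef := by
  have hC0 : 0 ≤ C := by linarith
  have hκ : 0 ≤ C * π * M ^ 2 / 2 := by positivity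
  have hnorm : ∀ i, 0 ≤ ∑ j, X i j ^ 2 := fun i => Finset.sum_nonneg fun j _ => sq_nonneg _
  intro t htN
  induction t with
  | zero => simpa [hβ0, hSig0] using PosSemidef.zero
  | succ t ih =>
    have hproj : IsStarProjection (P (t + 1)) :=
      hP (t + 1) ▸ isStarProjection_inv_sum_sq_smul_vecMulVec (X (t + 1))
    have hmono := le_succ_of_eq_mul_sup'_Icc hβ hκ hnorm hβ0 htN
    rw [hSig (t + 1) (by omega) htN, Nat.add_sub_cancel, vecMulVec_self_eq_sum_sq_smul, ← hP,
      smul_smul]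
    refine hproj.posSemidef_smul_one_sub_conj_add_smul (ih (by omega)) hmono
      (mul_one_sub_inv_sq_add_le hC (nonneg_of_eq_mul_sup'_Icc hβ hκ hnorm hβ0 (by omega))
        hmono ?_)
    calc C * (π * M ^ 2 / 2 * ∑ j, X (t + 1) j ^ 2)
        = C * π * M ^ 2 / 2 * ∑ j, X (t + 1) j ^ 2 := by ring
      _ ≤ β (t + 1) := mul_le_of_eq_mul_sup'_Icc hβ hκ (by omega) htN

/-- Covariance recursion bound: with `β_t = (CπM²/2)·max_{1≤i≤t}‖X_i‖²` and
`Σ_t = (I − P_{X_t}/C) Σ_{t−1} (I − P_{X_t}/C) + (πM²/2) X_t X_tᵀ` (where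
`P_{X_t} = X_t X_tᵀ/‖X_t‖²`), we have `Σ_t ⪯ β_t I` for all `0 ≤ t ≤ N`. -/
theorem covariance_recursion_bound {d N : ℕ} (C M : ℝ) (hC : 1 ≤ C) (hM : 0 < M)
    (X : ℕ → Fin d → ℝ) (hX : ∀ t, 1 ≤ t → t ≤ N → X t ≠ 0)
    (β : ℕ → ℝ) (hβ0 : β 0 = 0)
    (hβ : ∀ t (ht : 1 ≤ t), t ≤ N →
      β t = C * π * M ^ 2 / 2 *
        (Finset.Icc 1 t).sup' (Finset.nonempty_Icc.mpr ht) (fun i => ∑ j, X i j ^ 2))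
    (P : ℕ → Matrix (Fin d) (Fin d) ℝ)
    (hP : ∀ t, P t = (∑ j, X t j ^ 2)⁻¹ • Matrix.vecMulVec (X t) (X t))
    (Sig : ℕ → Matrix (Fin d) (Fin d) ℝ) (hSig0 : Sig 0 = 0)
    (hSig : ∀ t, 1 ≤ t → t ≤ N →
      Sig t = (1 - C⁻¹ • P t) * Sig (t - 1) * (1 - C⁻¹ • P t)
        + (π * M ^ 2 / 2) • Matrix.vecMulVec (X t) (X t)) :
    ∀ t ≤ N, (β t • (1 : Matrix (Fin d) (Fin d) ℝ) - Sig t).PosSemidef :=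
  covariance_recursion_bound_general C M hC X β hβ0 hβ P hP Sig hSig0 hSig
end

section
/- (Single-neuron one-bit quantization error bound.) Let C ≥ 1, p ≥ 1, K > 0, w ∈ ℝ^{N₀} with ‖w‖_∞ < K, and X ∈ ℝ^{m×N₀} with nonzero columns X₁,…,X_{N₀}. Run the stochastic path-following algorithm with the 4K-grid stochastic quantizer Q (unbiased, |Q(v) − v| ≤ 4K) to produce q ∈ ℝ^{N₀}: u₀ = 0, q_t = Q(w_t + ⟨u_{t−1}, X_t⟩/(C‖X_t‖²)), u_t = u_{t−1} + (w_t − q_t) X_t. Then with probability at least 1 − Σ_{t=2}^{N₀} √2·exp(−C‖X_t‖²/(32π·max_{1≤i≤t−1}‖X_i‖²)) − √2·m·N₀^{−p}, both ‖Xw − Xq‖_∞ ≤ 4K√(2πCp log N₀)·max_{1≤i≤N₀}‖X_i‖ and ‖q‖_∞ ≤ 2K hold. -/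
open MeasureTheory ProbabilityTheory Real

noncomputable section

/-!
The error vector obeys `u_t = P_t u_{t-1} - (q_t - v_t) X_t` with
`P_t = I - X_t X_tᵀ / (C ‖X_t‖²)`, and the rounding error `q_t - v_t` is bounded by `4K` and
conditionally centred given the past. Instead of the convex domination `u_t ≺_cx N(0, β_t I)` we
propagate the moment bound it yields: every `⟨u_t, a⟩` has a sub-Gaussian mgf with proxy
`β_t ‖a‖²`. In the inductive step Hoeffding's lemma, applied conditionally on the past, adds
`16 K² ⟨X_t, a⟩²` to the proxy, and this is absorbed by the shrinking
`‖P_t a‖² = ‖a‖² - (2C - 1) ⟨X_t, a⟩² / (C² ‖X_t‖²)` because `C ≥ 1` and `π ≥ 2`.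
Since the alphabet is `2K` times the odd integers, `|q_t| > 2K` forces `|q_t| ≥ 6K` and hence
`|⟨u_{t-1}, X_t⟩| > C K ‖X_t‖²`, a tail event in the direction `X_t`; `‖u_{N₀}‖_∞` is controlled
coordinatewise, and a union bound concludes.
-/

open scoped NNReal

theorem dotProduct_self_nonneg {n : Type*} [Fintype n] (x : n → ℝ) : 0 ≤ x ⬝ᵥ x := by
  simpa using dotProduct_self_star_nonneg x

theorem dotProduct_self_pos {n : Type*} [Fintype n] {x : n → ℝ} (hx : x ≠ 0) : 0 < x ⬝ᵥ x :=
  (dotProduct_self_nonneg x).lt_of_ne' (dotProduct_self_eq_zero.not.mpr hx)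

theorem mul_dotProduct_sub_smul_add_le {n : Type*} [Fintype n] {x a : n → ℝ} {B B' C c : ℝ}
    (hC : 0 < C) (hBB' : B ≤ B')
    (hc : c ^ 2 * C ^ 2 * (x ⬝ᵥ x) ≤ (2 * C - 1) * B') :
    B * ((a - ((x ⬝ᵥ a) / (C * (x ⬝ᵥ x))) • x) ⬝ᵥ (a - ((x ⬝ᵥ a) / (C * (x ⬝ᵥ x))) • x)) +
      c ^ 2 * (x ⬝ᵥ a) ^ 2 ≤ B' * (a ⬝ᵥ a) := by
  rcases eq_or_ne x 0 with rfl | hx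
  · simpa using mul_le_mul_of_nonneg_right hBB' (dotProduct_self_nonneg a)
  set a' := a - ((x ⬝ᵥ a) / (C * (x ⬝ᵥ x))) • x
  have hxx : 0 < x ⬝ᵥ x := dotProduct_self_pos hx
  have ha' : a' ⬝ᵥ a' = a ⬝ᵥ a - (2 * C - 1) * (x ⬝ᵥ a) ^ 2 / (C ^ 2 * (x ⬝ᵥ x)) := by
    simp only [a', sub_dotProduct, dotProduct_sub, smul_dotProduct, dotProduct_smul,
      dotProduct_comm a x, smul_eq_mul]
    field_simp
    ring
  have hgain : c ^ 2 * (x ⬝ᵥ a) ^ 2 ≤ B' * ((2 * C - 1) * (x ⬝ᵥ a) ^ 2 / (C ^ 2 * (x ⬝ᵥ x))) := by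
    rw [mul_div_assoc', le_div_iff₀ (by positivity)]
    nlinarith [mul_le_mul_of_nonneg_right hc (sq_nonneg (x ⬝ᵥ a))]
  have hB : B * (a' ⬝ᵥ a') ≤ B' * (a' ⬝ᵥ a') :=
    mul_le_mul_of_nonneg_right hBB' (dotProduct_self_nonneg a')
  rw [ha'] at hB ⊢
  linarith

theorem exp_mul_le_cosh_add_div_mul_sinh {c y : ℝ} (hy : |y| ≤ c) (l : ℝ) :
    exp (l * y) ≤ cosh (l * c) + y / c * sinh (l * c) := by
  rcases (abs_nonneg y).trans hy |>.eq_or_lt with rfl | hc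
  · simp [abs_nonpos_iff.mp hy]
  rw [abs_le] at hy
  -- `l * y` is the convex combination of `∓ l * c` with weights `(c ∓ y) / (2c)`
  have hconv := convexOn_exp.2 (Set.mem_univ (-(l * c))) (Set.mem_univ (l * c))
    (div_nonneg (by linarith) (by positivity) : 0 ≤ (c - y) / (2 * c))
    (div_nonneg (by linarith) (by positivity) : 0 ≤ (c + y) / (2 * c))
    (by field_simp; ring)
  have hcomb : (c - y) / (2 * c) * -(l * c) + (c + y) / (2 * c) * (l * c) = l * y := by
    field_simp; ring
  simp only [smul_eq_mul, hcomb] at hconv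
  refine hconv.trans_eq ?_
  rw [cosh_eq, sinh_eq]
  field_simp
  ring

section Hoeffding

variable {Ω : Type*} {m m₀ : MeasurableSpace Ω} {μ : Measure Ω} [IsFiniteMeasure μ]

theorem condExp_exp_mul_le_of_abs_le (hm : m ≤ m₀) {Y : Ω → ℝ}
    (hY : AEStronglyMeasurable Y μ) {c : ℝ} (hYc : ∀ᵐ ω ∂μ, |Y ω| ≤ c)
    (hY0 : μ[Y|m] =ᵐ[μ] 0) (t : ℝ) :
    μ[fun ω => exp (t * Y ω)|m] ≤ᵐ[μ] fun _ => exp (c ^ 2 * t ^ 2 / 2) := by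
  have hYint : Integrable Y μ := Integrable.of_bound hY c (by simpa using hYc)
  have hexp : Integrable (fun ω => exp (t * Y ω)) μ :=
    integrable_exp_mul_of_mem_Icc hY.aemeasurable (hYc.mono fun _ => abs_le.mp)
  have hchord : μ[fun ω => cosh (t * c) + sinh (t * c) / c * Y ω|m] =ᵐ[μ]
      μ[fun _ => cosh (t * c)|m] + μ[(sinh (t * c) / c) • Y|m] :=
    condExp_add (integrable_const _) (hYint.const_mul _) m
  calc μ[fun ω => exp (t * Y ω)|m]
      ≤ᵐ[μ] μ[fun ω => cosh (t * c) + sinh (t * c) / c * Y ω|m] := by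
        refine condExp_mono hexp ((integrable_const _).add (hYint.const_mul _)) ?_
        filter_upwards [hYc] with ω hω
        exact (exp_mul_le_cosh_add_div_mul_sinh hω t).trans_eq (by ring)
    _ =ᵐ[μ] fun _ => cosh (t * c) := by
        filter_upwards [hchord, condExp_smul (sinh (t * c) / c) Y m, hY0] with ω h1 h2 h3
        simp [h1, h2, h3, condExp_const hm]
    _ ≤ᵐ[μ] fun _ => exp (c ^ 2 * t ^ 2 / 2) :=
        .of_forall fun _ => (cosh_le_exp_half_sq _).trans_eq (by ring_nf)

end Hoeffding

namespace ProbabilityTheory.HasSubgaussianMGF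

variable {Ω : Type*} {m m₀ : MeasurableSpace Ω} {μ : Measure Ω} {X Y : Ω → ℝ} {c c' : ℝ≥0}

theorem mono (h : HasSubgaussianMGF X c μ) (hc : c ≤ c') : HasSubgaussianMGF X c' μ where
  integrable_exp_mul := h.integrable_exp_mul
  mgf_le t := (h.mgf_le t).trans (exp_le_exp.2 (by gcongr))

/-- A substitute for `add_of_hasCondSubgaussianMGF`, which needs a `StandardBorelSpace`, through
Hoeffding's lemma for conditional expectations. -/
theorem add_of_condExp_eq_zero [IsFiniteMeasure μ] (hm : m ≤ m₀) (hX : HasSubgaussianMGF X c μ)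
    (hXm : StronglyMeasurable[m] X) (hY : AEStronglyMeasurable Y μ) {b : ℝ}
    (hYb : ∀ᵐ ω ∂μ, |Y ω| ≤ b) (hY0 : μ[Y|m] =ᵐ[μ] 0) (hc' : c + b ^ 2 ≤ (c' : ℝ)) :
    HasSubgaussianMGF (X + Y) c' μ := by
  have hexpY (t : ℝ) : Integrable (fun ω => exp (t * Y ω)) μ :=
    integrable_exp_mul_of_mem_Icc hY.aemeasurable (hYb.mono fun _ => abs_le.mp)
  have hprod (t : ℝ) : Integrable (fun ω => exp (t * X ω) * exp (t * Y ω)) μ := by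
    refine (hX.integrable_exp_mul t).mul_bdd (hexpY t).1 (c := exp (|t| * b)) ?_
    filter_upwards [hYb] with ω hω
    rw [norm_of_nonneg (exp_pos _).le, exp_le_exp]
    calc t * Y ω ≤ |t| * |Y ω| := (le_abs_self _).trans (abs_mul _ _).le
      _ ≤ |t| * b := by gcongr
  have hsplit (t : ℝ) : (fun ω => exp (t * (X + Y) ω)) =
      fun ω => exp (t * X ω) * exp (t * Y ω) := by
    ext ω; rw [Pi.add_apply, mul_add, exp_add]
  refine ⟨fun t => hsplit t ▸ hprod t, fun t => ?_⟩
  have hpull : μ[fun ω => exp (t * X ω) * exp (t * Y ω)|m] =ᵐ[μ]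
      (fun ω => exp (t * X ω)) * μ[fun ω => exp (t * Y ω)|m] :=
    condExp_mul_of_stronglyMeasurable_left
      (continuous_exp.comp_stronglyMeasurable (hXm.const_mul t)) (hprod t) (hexpY t)
  calc mgf (X + Y) μ t = ∫ ω, exp (t * X ω) * exp (t * Y ω) ∂μ := by rw [mgf, hsplit]
    _ = ∫ ω, exp (t * X ω) * μ[fun ω => exp (t * Y ω)|m] ω ∂μ :=
        (integral_condExp hm).symm.trans (integral_congr_ae hpull)
    _ ≤ ∫ ω, exp (t * X ω) * exp (b ^ 2 * t ^ 2 / 2) ∂μ := by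
        refine integral_mono_ae (integrable_condExp.congr hpull)
          ((hX.integrable_exp_mul t).mul_const _) ?_
        filter_upwards [condExp_exp_mul_le_of_abs_le hm hY hYb hY0 t] with ω hω
        exact mul_le_mul_of_nonneg_left hω (exp_pos _).le
    _ = mgf X μ t * exp (b ^ 2 * t ^ 2 / 2) := integral_mul_const _ _
    _ ≤ exp (c * t ^ 2 / 2) * exp (b ^ 2 * t ^ 2 / 2) := by
        gcongr; exact hX.mgf_le t
    _ ≤ exp (c' * t ^ 2 / 2) := by
        rw [← exp_add, exp_le_exp]; nlinarith [sq_nonneg t]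

theorem measureReal_le_abs_le [IsFiniteMeasure μ] (h : HasSubgaussianMGF X c μ) {ε : ℝ}
    (hε : 0 ≤ ε) : μ.real {ω | ε ≤ |X ω|} ≤ 2 * exp (-ε ^ 2 / (2 * c)) :=
  calc μ.real {ω | ε ≤ |X ω|} ≤ μ.real ({ω | ε ≤ X ω} ∪ {ω | ε ≤ (-X) ω}) :=
        measureReal_mono fun ω (hω : ε ≤ |X ω|) =>
          show ε ≤ X ω ∨ ε ≤ -X ω from le_abs.mp hω
    _ ≤ μ.real {ω | ε ≤ X ω} + μ.real {ω | ε ≤ (-X) ω} := measureReal_union_le _ _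
    _ ≤ exp (-ε ^ 2 / (2 * c)) + exp (-ε ^ 2 / (2 * c)) :=
        add_le_add (h.measure_ge_le hε) (h.neg.measure_ge_le hε)
    _ = 2 * exp (-ε ^ 2 / (2 * c)) := by ring

/-- The paper's Gaussian tail bound `√2 · exp (-ε² / (4c))` is the geometric mean of the trivial
bound `1` and the two-sided Chernoff bound `2 · exp (-ε² / (2c))`. -/
theorem measureReal_lt_abs_le [IsZeroOrProbabilityMeasure μ] (h : HasSubgaussianMGF X c μ)
    {ε : ℝ} (hε : 0 ≤ ε) : μ.real {ω | ε < |X ω|} ≤ √2 * exp (-ε ^ 2 / (4 * c)) := by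
  set P := μ.real {ω | ε ≤ |X ω|}
  calc μ.real {ω | ε < |X ω|} ≤ P := measureReal_mono fun ω (hω : ε < |X ω|) => hω.le
    _ = √(P * P) := (sqrt_mul_self measureReal_nonneg).symm
    _ ≤ √(1 * (2 * exp (-ε ^ 2 / (2 * c)))) :=
        sqrt_le_sqrt (mul_le_mul measureReal_le_one (h.measureReal_le_abs_le hε)
          measureReal_nonneg zero_le_one)
    _ = √2 * exp (-ε ^ 2 / (4 * c)) := by
        rw [one_mul, sqrt_mul zero_le_two, ← exp_half]; ring_nf

end ProbabilityTheory.HasSubgaussianMGF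

theorem one_sub_sum_sub_sum_le_measureReal {Ω ι κ : Type*} [MeasurableSpace Ω] {μ : Measure Ω}
    [IsProbabilityMeasure μ] {s : Set Ω} {I : Finset ι} {J : Finset κ}
    {E : ι → Set Ω} {F : κ → Set Ω} {a : ι → ℝ} {b : κ → ℝ}
    (hs : ∀ᵐ ω ∂μ, ω ∉ s → (∃ i ∈ I, ω ∈ E i) ∨ ∃ j ∈ J, ω ∈ F j)
    (ha : ∀ i ∈ I, μ.real (E i) ≤ a i) (hb : ∀ j ∈ J, μ.real (F j) ≤ b j) :
    1 - ∑ i ∈ I, a i - ∑ j ∈ J, b j ≤ μ.real s := by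
  have hcover : μ.real sᶜ ≤ μ.real ((⋃ i ∈ I, E i) ∪ ⋃ j ∈ J, F j) := by
    refine ENNReal.toReal_mono (measure_ne_top _ _) (measure_mono_ae ?_)
    filter_upwards [hs] with ω hω (hωs : ω ∉ s)
    change ω ∈ (⋃ i ∈ I, E i) ∪ ⋃ j ∈ J, F j
    simpa only [Set.mem_union, Set.mem_iUnion₂, exists_prop] using hω hωs
  have htotal : 1 ≤ μ.real s + μ.real sᶜ := by
    simpa using measureReal_union_le (μ := μ) s sᶜ
  have hunion := (measureReal_union_le (μ := μ) (⋃ i ∈ I, E i) (⋃ j ∈ J, F j)).trans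
    (add_le_add ((measureReal_biUnion_finset_le I E).trans (Finset.sum_le_sum ha))
      ((measureReal_biUnion_finset_le J F).trans (Finset.sum_le_sum hb)))
  linarith

theorem six_mul_le_abs_of_two_mul_lt_abs {K x : ℝ} (hK : 0 < K)
    (hx : ∃ k : ℤ, x = 4 * K * k + 2 * K ∨ x = 4 * K * k - 2 * K) (h : 2 * K < |x|) :
    6 * K ≤ |x| := by
  obtain ⟨o, ho, rfl⟩ : ∃ o : ℤ, Odd o ∧ x = 2 * K * o := by
    obtain ⟨k, rfl | rfl⟩ := hx
    exacts [⟨2 * k + 1, odd_two_mul_add_one k, by push_cast; ring⟩,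
      ⟨2 * k - 1, ⟨k - 1, by ring⟩, by push_cast; ring⟩]
  rw [abs_mul, abs_of_pos (by positivity : 0 < 2 * K), ← Int.cast_abs] at h ⊢
  have h1 : 1 < |o| := by exact_mod_cast (lt_mul_iff_one_lt_right (by positivity)).mp h
  have h3 : 3 ≤ |o| := by
    obtain ⟨k, rfl⟩ := ho
    rcases abs_cases (2 * k + 1) with ⟨he, _⟩ | ⟨he, _⟩ <;> omega
  have h3' : (3 : ℝ) ≤ |o| := by exact_mod_cast h3
  nlinarith

theorem mul_lt_abs_of_two_mul_lt_abs {K D w z q : ℝ} (hK : 0 < K) (hD : 0 < D) (hw : |w| < K)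
    (hgrid : ∃ k : ℤ, q = 4 * K * k + 2 * K ∨ q = 4 * K * k - 2 * K)
    (hq : |q - (w + z / D)| ≤ 4 * K) (h : 2 * K < |q|) : K * D < |z| := by
  have h6 := six_mul_le_abs_of_two_mul_lt_abs hK hgrid h
  have hv := abs_sub_abs_le_abs_sub q (w + z / D)
  have hwz := abs_add_le w (z / D)
  rw [abs_div, abs_of_pos hD] at hwz
  rw [← lt_div_iff₀ hD]
  linarith

section PathFollowing

variable {Ω : Type*} {m : ℕ} {C : ℝ} {w : ℕ → ℝ}
  {X : ℕ → Fin m → ℝ} {q : ℕ → Ω → ℝ} {u : ℕ → Ω → Fin m → ℝ} {v : ℕ → Ω → ℝ}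
  {past : ℕ → MeasurableSpace Ω}

theorem measurable_error_of_lt (hu0 : u 0 = 0)
    (hu : ∀ t, 1 ≤ t → u t = fun ω => u (t - 1) ω + (w t - q t ω) • X t)
    (hpast : ∀ t, past t = ⨆ s ∈ Set.Ico 1 t,
      MeasurableSpace.comap (q s) (inferInstance : MeasurableSpace ℝ)) :
    ∀ r t, r < t → Measurable[past t] (u r)
  | 0, _, _ => hu0 ▸ measurable_const
  | r + 1, t, hrt => by
    have hq : Measurable[past t] (q (r + 1)) := by
      rw [measurable_iff_comap_le, hpast t]
      exact le_biSup (fun s => MeasurableSpace.comap (q s) _) (Set.mem_Ico.mpr ⟨by omega, hrt⟩)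
    rw [hu (r + 1) (by omega), Nat.add_sub_cancel]
    exact (measurable_error_of_lt hu0 hu hpast r t (by omega)).add
      ((measurable_const.sub hq).smul_const _)

theorem error_dotProduct_eq {t : ℕ}
    (hv : v t = fun ω => w t + (u (t - 1) ω ⬝ᵥ X t) / (C * (X t ⬝ᵥ X t)))
    (hu : u t = fun ω => u (t - 1) ω + (w t - q t ω) • X t) (a : Fin m → ℝ) :
    (fun ω => u t ω ⬝ᵥ a) = (fun ω => u (t - 1) ω ⬝ᵥ
        (a - ((X t ⬝ᵥ a) / (C * (X t ⬝ᵥ X t))) • X t)) + -(X t ⬝ᵥ a) • (q t - v t) := by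
  ext ω
  simp only [hu, hv, Pi.add_apply, Pi.smul_apply, Pi.sub_apply, smul_eq_mul, add_dotProduct,
    smul_dotProduct, dotProduct_sub, dotProduct_smul, dotProduct_comm (X t) a]
  ring

theorem hasSubgaussianMGF_error_dotProduct [MeasurableSpace Ω] {μ : Measure Ω}
    [IsZeroOrProbabilityMeasure μ] {N₀ : ℕ} (hC : 0 < C) {b : ℝ} (hq : ∀ t, Measurable (q t))
    (hu0 : u 0 = 0) (hu : ∀ t, 1 ≤ t → u t = fun ω => u (t - 1) ω + (w t - q t ω) • X t)
    (hv : ∀ t, v t = fun ω => w t + (u (t - 1) ω ⬝ᵥ X t) / (C * (X t ⬝ᵥ X t)))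
    (hbdd : ∀ t, 1 ≤ t → t ≤ N₀ → ∀ᵐ ω ∂μ, |q t ω - v t ω| ≤ b)
    (hpast : ∀ t, past t = ⨆ s ∈ Set.Ico 1 t,
      MeasurableSpace.comap (q s) (inferInstance : MeasurableSpace ℝ))
    (hmean : ∀ t, 1 ≤ t → t ≤ N₀ → μ[(fun ω => q t ω - v t ω) | past t] =ᵐ[μ] 0)
    {B : ℕ → ℝ} (hB0 : 0 ≤ B 0) (hB : Monotone B)
    (hBX : ∀ t, 1 ≤ t → t ≤ N₀ → b ^ 2 * C ^ 2 * (X t ⬝ᵥ X t) ≤ (2 * C - 1) * B t) :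
    ∀ t ≤ N₀, ∀ a, HasSubgaussianMGF (fun ω => u t ω ⬝ᵥ a) (B t * (a ⬝ᵥ a)).toNNReal μ
  | 0, _, a => by
    simpa [hu0] using HasSubgaussianMGF.fun_zero.mono zero_le
  | t + 1, ht, a => by
    have hBnn (s : ℕ) : 0 ≤ B s := hB0.trans (hB (Nat.zero_le s))
    have hle : past (t + 1) ≤ ‹MeasurableSpace Ω› := by
      rw [hpast]; exact iSup₂_le fun s _ => (hq s).comap_le
    have hut : Measurable[past (t + 1)] (u t) :=
      measurable_error_of_lt hu0 hu hpast t (t + 1) (lt_add_one t)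
    have hsplit := error_dotProduct_eq (hv (t + 1)) (hu (t + 1) (by omega)) a
    simp only [Nat.add_sub_cancel] at hsplit
    rw [hsplit]
    set s := X (t + 1) ⬝ᵥ a
    set a' := a - (s / (C * (X (t + 1) ⬝ᵥ X (t + 1)))) • X (t + 1)
    have hvt : Measurable (v (t + 1)) := by
      rw [hv, Nat.add_sub_cancel]
      exact measurable_const.add (((continuous_id.dotProduct continuous_const).measurable.comp
        (hut.mono hle le_rfl)).div_const _)
    refine (hasSubgaussianMGF_error_dotProduct hC hq hu0 hu hv hbdd hpast hmean hB0 hB hBX t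
      (by omega) a').add_of_condExp_eq_zero hle
      ((continuous_id.dotProduct continuous_const).measurable.comp hut).stronglyMeasurable
      (((hq (t + 1)).sub hvt).const_smul (-s)).aestronglyMeasurable (b := |s| * b) ?_ ?_ ?_
    · filter_upwards [hbdd (t + 1) (by omega) ht] with ω hω
      simpa [abs_mul] using mul_le_mul_of_nonneg_left hω (abs_nonneg s)
    · have hmean' : μ[q (t + 1) - v (t + 1)|past (t + 1)] =ᵐ[μ] 0 :=
        hmean (t + 1) (by omega) ht
      filter_upwards [condExp_smul (-s) (q (t + 1) - v (t + 1)) (past (t + 1)), hmean']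
        with ω h1 h2
      rw [h1, Pi.smul_apply, h2, Pi.zero_apply, smul_zero]
    · rw [Real.coe_toNNReal _ (mul_nonneg (hBnn _) (dotProduct_self_nonneg _)),
        Real.coe_toNNReal _ (mul_nonneg (hBnn _) (dotProduct_self_nonneg _))]
      calc B t * (a' ⬝ᵥ a') + (|s| * b) ^ 2 = B t * (a' ⬝ᵥ a') + b ^ 2 * s ^ 2 := by
            rw [mul_pow, sq_abs]; ring
        _ ≤ B (t + 1) * (a ⬝ᵥ a) :=
            mul_dotProduct_sub_smul_add_le hC (hB t.le_succ) (hBX (t + 1) (by omega) ht)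

theorem ae_mul_lt_abs_error_dotProduct [MeasurableSpace Ω] {μ : Measure Ω} {N₀ : ℕ} {K : ℝ}
    (hK : 0 < K) (hC : 0 < C) (hw : ∀ t, 1 ≤ t → t ≤ N₀ → |w t| < K)
    (hX : ∀ t, 1 ≤ t → t ≤ N₀ → X t ≠ 0)
    (hv : ∀ t, v t = fun ω => w t + (u (t - 1) ω ⬝ᵥ X t) / (C * (X t ⬝ᵥ X t)))
    (hgrid : ∀ t, 1 ≤ t → t ≤ N₀ → ∀ᵐ ω ∂μ, ∃ k : ℤ,
      q t ω = 4 * K * k + 2 * K ∨ q t ω = 4 * K * k - 2 * K)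
    (hbdd : ∀ t, 1 ≤ t → t ≤ N₀ → ∀ᵐ ω ∂μ, |q t ω - v t ω| ≤ 4 * K) :
    ∀ᵐ ω ∂μ, ∀ t ∈ Finset.Icc 1 N₀,
      2 * K < |q t ω| → K * (C * (X t ⬝ᵥ X t)) < |u (t - 1) ω ⬝ᵥ X t| := by
  rw [Filter.eventually_all_finset]
  intro t ht
  obtain ⟨h1, hN⟩ := Finset.mem_Icc.mp ht
  filter_upwards [hgrid t h1 hN, hbdd t h1 hN] with ω hgω hbω
  rw [hv] at hbω
  exact mul_lt_abs_of_two_mul_lt_abs hK (mul_pos hC (dotProduct_self_pos (hX t h1 hN)))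
    (hw t h1 hN) hgω hbω

theorem ae_lt_abs_of_not_mem [MeasurableSpace Ω] {μ : Measure Ω} {N₀ : ℕ} {K R : ℝ}
    (hK : 0 < K) (hC : 0 < C) (hR : 0 ≤ R) (hw : ∀ t, 1 ≤ t → t ≤ N₀ → |w t| < K)
    (hX : ∀ t, 1 ≤ t → t ≤ N₀ → X t ≠ 0) (hu0 : u 0 = 0)
    (hv : ∀ t, v t = fun ω => w t + (u (t - 1) ω ⬝ᵥ X t) / (C * (X t ⬝ᵥ X t)))
    (hgrid : ∀ t, 1 ≤ t → t ≤ N₀ → ∀ᵐ ω ∂μ, ∃ k : ℤ,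
      q t ω = 4 * K * k + 2 * K ∨ q t ω = 4 * K * k - 2 * K)
    (hbdd : ∀ t, 1 ≤ t → t ≤ N₀ → ∀ᵐ ω ∂μ, |q t ω - v t ω| ≤ 4 * K) :
    ∀ᵐ ω ∂μ, ω ∉ {ω | ‖u N₀ ω‖ ≤ R ∧ ∀ t, 1 ≤ t → t ≤ N₀ → |q t ω| ≤ 2 * K} →
      (∃ t ∈ Finset.Icc 2 N₀, ω ∈ {ω | K * (C * (X t ⬝ᵥ X t)) < |u (t - 1) ω ⬝ᵥ X t|}) ∨
        ∃ j ∈ Finset.univ, ω ∈ {ω | R < |u N₀ ω j|} := by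
  filter_upwards [ae_mul_lt_abs_error_dotProduct hK hC hw hX hv hgrid hbdd] with ω hω hgood
  simp only [not_and_or, not_le, not_forall, exists_prop] at hgood
  rcases hgood with hnorm | ⟨t, h1, hN, hqt⟩
  · right
    obtain ⟨j, hj⟩ := not_forall.mp (mt (pi_norm_le_iff_of_nonneg hR).mpr hnorm.not_ge)
    exact ⟨j, Finset.mem_univ j, by simpa using not_le.mp hj⟩
  · left
    have hbad := hω t (Finset.mem_Icc.mpr ⟨h1, hN⟩) hqt
    refine ⟨t, Finset.mem_Icc.mpr ⟨?_, hN⟩, hbad⟩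
    -- the first quantization is always in range, because `u 0 = 0`
    rcases h1.eq_or_lt with rfl | h2
    · have := mul_pos hK (mul_pos hC (dotProduct_self_pos (hX 1 le_rfl hN)))
      simp only [Nat.sub_self, hu0, Pi.zero_apply, zero_dotProduct, abs_zero] at hbad
      linarith
    · exact h2

end PathFollowing

/-- The variance proxy `β_t = 8 C π K² max_{i ≤ t} ‖X_i‖²`; the running maximum `Mx` is only
specified from `t = 1` on, so `t = 0` is sent to `1`. -/
def quantizationProxy (C K : ℝ) (Mx : ℕ → ℝ) (t : ℕ) : ℝ := 8 * C * π * K ^ 2 * Mx (max t 1)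

section Proxy

variable {m : ℕ} {X : ℕ → Fin m → ℝ} {Mx : ℕ → ℝ} {C K : ℝ}

def IsRunningMaxSq (X : ℕ → Fin m → ℝ) (Mx : ℕ → ℝ) : Prop :=
  ∀ t (ht : 1 ≤ t), Mx t =
    (Finset.Icc 1 t).sup' (Finset.nonempty_Icc.mpr ht) (fun i => ∑ j, X i j ^ 2)

theorem sq_le_runningMax (hMx : IsRunningMaxSq X Mx) {i t : ℕ} (hi : 1 ≤ i) (hit : i ≤ t) :
    ∑ j, X i j ^ 2 ≤ Mx t := by
  rw [hMx t (hi.trans hit)]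
  exact Finset.le_sup' (fun i => ∑ j, X i j ^ 2) (Finset.mem_Icc.mpr ⟨hi, hit⟩)

theorem runningMax_mono (hMx : IsRunningMaxSq X Mx) {s t : ℕ} (hs : 1 ≤ s) (hst : s ≤ t) :
    Mx s ≤ Mx t := by
  rw [hMx s hs]
  exact Finset.sup'_le _ _ fun i hi =>
    sq_le_runningMax hMx (Finset.mem_Icc.mp hi).1 ((Finset.mem_Icc.mp hi).2.trans hst)

theorem quantizationProxy_of_one_le {t : ℕ} (ht : 1 ≤ t) :
    quantizationProxy C K Mx t = 8 * C * π * K ^ 2 * Mx t := by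
  rw [quantizationProxy, max_eq_left ht]

theorem quantizationProxy_mono (hC : 0 ≤ C) (hMx : IsRunningMaxSq X Mx) :
    Monotone (quantizationProxy C K Mx) := fun s t hst => by
  have := runningMax_mono hMx (le_max_right s 1) (max_le_max hst le_rfl)
  unfold quantizationProxy; gcongr

theorem quantizationProxy_nonneg (hC : 0 ≤ C) (hMx : IsRunningMaxSq X Mx) :
    0 ≤ quantizationProxy C K Mx 0 := by
  have := (Finset.sum_nonneg fun j _ => sq_nonneg (X 1 j)).trans
    (sq_le_runningMax hMx le_rfl le_rfl)
  unfold quantizationProxy; positivity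

theorem sq_mul_le_quantizationProxy (hC : 1 ≤ C) (hMx : IsRunningMaxSq X Mx) {t : ℕ} (ht : 1 ≤ t) :
    (4 * K) ^ 2 * C ^ 2 * (X t ⬝ᵥ X t) ≤ (2 * C - 1) * quantizationProxy C K Mx t := by
  have hmax : X t ⬝ᵥ X t ≤ Mx t := by
    simpa [dotProduct, sq] using sq_le_runningMax hMx ht le_rfl
  have hMx0 : 0 ≤ Mx t := (dotProduct_self_nonneg _).trans hmax
  rw [quantizationProxy_of_one_le ht]
  calc (4 * K) ^ 2 * C ^ 2 * (X t ⬝ᵥ X t) ≤ (4 * K) ^ 2 * C ^ 2 * Mx t := by gcongr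
    _ = 8 * C * K ^ 2 * Mx t * (2 * C) := by ring
    _ ≤ 8 * C * K ^ 2 * Mx t * ((2 * C - 1) * π) :=
        mul_le_mul_of_nonneg_left (by nlinarith [pi_gt_three]) (by positivity)
    _ = (2 * C - 1) * (8 * C * π * K ^ 2 * Mx t) := by ring

end Proxy

section Tails

variable {Ω : Type*} [MeasurableSpace Ω] {μ : Measure Ω} [IsZeroOrProbabilityMeasure μ]
  {Z : Ω → ℝ} {C K M : ℝ}

theorem measureReal_lt_abs_le_exp_div {n : ℝ} (hC : 0 < C) (hK : 0 < K) (hn : 0 < n)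
    (hM : 0 ≤ M) (h : HasSubgaussianMGF Z (8 * C * π * K ^ 2 * M * n).toNNReal μ) :
    μ.real {ω | K * (C * n) < |Z ω|} ≤ √2 * exp (-(C * n) / (32 * π * M)) := by
  have h := h.measureReal_lt_abs_le (ε := K * (C * n)) (by positivity)
  rw [Real.coe_toNNReal _ (by positivity)] at h
  refine h.trans_eq ?_
  congr 2
  field_simp
  ring

theorem measureReal_lt_abs_le_rpow_neg {p : ℝ} {N : ℕ} (hC : 0 < C) (hK : 0 < K) (hM : 0 < M)
    (hp : 0 ≤ p) (hN : 1 ≤ N) (h : HasSubgaussianMGF Z (8 * C * π * K ^ 2 * M).toNNReal μ) :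
    μ.real {ω | 4 * K * √(2 * π * C * p * log N) * √M < |Z ω|} ≤ √2 * (N : ℝ) ^ (-p) := by
  have hlog : 0 ≤ log N := log_nonneg (by exact_mod_cast hN)
  have h := h.measureReal_lt_abs_le (ε := 4 * K * √(2 * π * C * p * log N) * √M) (by positivity)
  rw [Real.coe_toNNReal _ (by positivity)] at h
  refine h.trans_eq ?_
  rw [rpow_def_of_pos (by exact_mod_cast hN), mul_pow, mul_pow, sq_sqrt (by positivity),
    sq_sqrt hM.le]
  congr 2
  field_simp
  ring

end Tails

/-- Single-neuron one-bit quantization error bound. Running the stochastic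
path-following algorithm (`u₀ = 0`, `q_t = Q(v_t)` where
`v_t = w_t + ⟨u_{t−1}, X_t⟩/(C‖X_t‖²)`, `u_t = u_{t−1} + (w_t − q_t) X_t`) with the
stochastic quantizer `Q` taking values in the alphabet `{4Kk ± 2K : k ∈ ℤ}`,
unbiased conditionally on the past and satisfying `|Q(v) − v| ≤ 4K` a.s., we have,
with probability at least
`1 − Σ_{t=2}^{N₀} √2·exp(−C‖X_t‖²/(32π·max_{1≤i≤t−1}‖X_i‖²)) − √2·m·N₀^{−p}`,
both `‖Xw − Xq‖_∞ = ‖u_{N₀}‖_∞ ≤ 4K√(2πCp log N₀)·max_{1≤i≤N₀}‖X_i‖` and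
`‖q‖_∞ ≤ 2K`. -/
theorem one_bit_quantization_error_bound {m N₀ : ℕ} {Ω : Type*} [MeasurableSpace Ω]
    (μ : Measure Ω) [IsProbabilityMeasure μ]
    (hN₀ : 1 ≤ N₀) (C p K : ℝ) (hC : 1 ≤ C) (hp : 1 ≤ p) (hK : 0 < K)
    (w : ℕ → ℝ) (hw : ∀ t, 1 ≤ t → t ≤ N₀ → |w t| < K)
    (X : ℕ → Fin m → ℝ) (hX : ∀ t, 1 ≤ t → t ≤ N₀ → X t ≠ 0)
    (q : ℕ → Ω → ℝ) (hq : ∀ t, Measurable (q t))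
    (u : ℕ → Ω → Fin m → ℝ) (hu0 : u 0 = 0)
    (v : ℕ → Ω → ℝ)
    (hv : ∀ t ω, v t ω =
      w t + (∑ j, u (t - 1) ω j * X t j) / (C * ∑ j, X t j ^ 2))
    (hu : ∀ t, 1 ≤ t → u t = fun ω => u (t - 1) ω + (w t - q t ω) • X t)
    -- the quantizer takes values in the alphabet `{…, −6K, −2K, 2K, 6K, …}`
    (hgrid : ∀ t, 1 ≤ t → t ≤ N₀ → ∀ᵐ ω ∂μ, ∃ k : ℤ,
      q t ω = 4 * K * k + 2 * K ∨ q t ω = 4 * K * k - 2 * K)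
    -- it stochastically rounds to an adjacent alphabet element: error at most `4K`
    (hbdd : ∀ t, 1 ≤ t → t ≤ N₀ → ∀ᵐ ω ∂μ, |q t ω - v t ω| ≤ 4 * K)
    -- and is conditionally unbiased given the past randomness
    (past : ℕ → MeasurableSpace Ω)
    (hpast : ∀ t, past t = ⨆ s ∈ Set.Ico 1 t,
      MeasurableSpace.comap (q s) (inferInstance : MeasurableSpace ℝ))
    (hmean : ∀ t, 1 ≤ t → t ≤ N₀ →
      μ[(fun ω => q t ω - v t ω) | past t] =ᵐ[μ] 0)
    -- running maximum of the squared column norms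
    (Mx : ℕ → ℝ)
    (hMx : ∀ t (ht : 1 ≤ t), Mx t =
      (Finset.Icc 1 t).sup' (Finset.nonempty_Icc.mpr ht) (fun i => ∑ j, X i j ^ 2)) :
    1 - (∑ t ∈ Finset.Icc 2 N₀,
          Real.sqrt 2 * Real.exp (-(C * ∑ j, X t j ^ 2) / (32 * π * Mx (t - 1))))
      - Real.sqrt 2 * m * (N₀ : ℝ) ^ (-p) ≤
    (μ {ω | ‖u N₀ ω‖ ≤ 4 * K * Real.sqrt (2 * π * C * p * Real.log N₀) *
              Real.sqrt (Mx N₀) ∧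
            ∀ t, 1 ≤ t → t ≤ N₀ → |q t ω| ≤ 2 * K}).toReal := by
  have hC0 : 0 < C := by linarith
  have hn (t : ℕ) : ∑ j, X t j ^ 2 = X t ⬝ᵥ X t := by simp [dotProduct, sq]
  have hv' (t : ℕ) : v t = fun ω => w t + (u (t - 1) ω ⬝ᵥ X t) / (C * (X t ⬝ᵥ X t)) := by
    ext ω; rw [hv, hn]; rfl
  have hMx_pos (t : ℕ) (ht : 1 ≤ t) (hN : t ≤ N₀) : 0 < Mx t :=
    (dotProduct_self_pos (hX t ht hN)).trans_le (hn t ▸ sq_le_runningMax hMx ht le_rfl)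
  have hsubG := hasSubgaussianMGF_error_dotProduct hC0 hq hu0 hu hv' hbdd hpast hmean
    (quantizationProxy_nonneg hC0.le hMx) (quantizationProxy_mono hC0.le hMx)
    (fun t ht _ => sq_mul_le_quantizationProxy hC hMx ht)
  have hcol (t : ℕ) (ht : t ∈ Finset.Icc 2 N₀) :
      μ.real {ω | K * (C * (X t ⬝ᵥ X t)) < |u (t - 1) ω ⬝ᵥ X t|} ≤
        √2 * exp (-(C * ∑ j, X t j ^ 2) / (32 * π * Mx (t - 1))) := by
    obtain ⟨h2, hN⟩ := Finset.mem_Icc.mp ht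
    have h := hsubG (t - 1) (by omega) (X t)
    rw [quantizationProxy_of_one_le (by omega)] at h
    rw [hn]
    exact measureReal_lt_abs_le_exp_div hC0 hK (dotProduct_self_pos (hX t (by omega) hN))
      (hMx_pos (t - 1) (by omega) (by omega)).le h
  have hcoord (j : Fin m) : μ.real {ω | 4 * K * √(2 * π * C * p * log N₀) * √(Mx N₀) <
      |u N₀ ω j|} ≤ √2 * (N₀ : ℝ) ^ (-p) := by
    have h := hsubG N₀ le_rfl (Pi.single j 1)
    simp only [dotProduct_single, mul_one, Pi.single_eq_same,
      quantizationProxy_of_one_le hN₀] at h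
    exact measureReal_lt_abs_le_rpow_neg hC0 hK (hMx_pos N₀ hN₀ le_rfl) (by linarith) hN₀ h
  refine (one_sub_sum_sub_sum_le_measureReal
    (ae_lt_abs_of_not_mem hK hC0 (by positivity) hw hX hu0 hv' hgrid hbdd) hcol
    fun j _ => hcoord j).trans_eq' ?_
  rw [Finset.sum_const, Finset.card_univ, Fintype.card_fin, nsmul_eq_mul]
  ring
end
end

section
/- (Single-neuron pruning error bound.) Let C ≥ 1, p ≥ 1, K > 0, w ∈ ℝ^{N₀} with ‖w‖_∞ ≤ K, and X ∈ ℝ^{m×N₀} with nonzero columns. Run the stochastic path-following algorithm with the unbiased pruning operator S satisfying |S(v) − v| ≤ K: u₀ = 0, q_t = S(w_t + ⟨u_{t−1}, X_t⟩/(C‖X_t‖²)), u_t = u_{t−1} + (w_t − q_t)X_t. Then P(‖Xw − Xq‖_∞ ≤ K√(2Cπp log N₀)·max_{1≤i≤N₀}‖X_i‖) ≥ 1 − √2·m·N₀^{−p}. -/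
/-!
Instead of comparing `u_{N₀}` with a Gaussian in convex order, we bound its moment generating
function directly: `E exp ⟪θ, u_t⟫ ≤ exp (β ‖θ‖² / 2)` for every `θ`, with
`β = K² C² max_i ‖X_i‖² / (2C - 1)`. With `s = ⟪θ, X_t⟫` the update gives
`⟪θ, u_t⟫ = ⟪θ', u_{t-1}⟫ - s (q_t - v_t)` where `θ' = θ - s X_t / (C ‖X_t‖²)` satisfies
`‖θ'‖² = ‖θ‖² - (2C - 1) s² / (C² ‖X_t‖²)`. The pruning error `q_t - v_t` is bounded by `K` and
has zero conditional mean given the past, so conditioning costs a factor `exp (K² s² / 2)`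
(conditional Hoeffding), which the decrease of `‖θ'‖²` absorbs. Chernoff and a union bound over
the `2m` signed coordinates bound the failure probability by `2m N₀^(-π p (2C-1)/C)`.
-/

open MeasureTheory ProbabilityTheory Real

noncomputable section

open scoped NNReal

theorem Real.exp_mul_le_cosh_add_sinh_div_mul {K x : ℝ} (s : ℝ) (hK : 0 < K) (hx : |x| ≤ K) :
    exp (s * x) ≤ cosh (s * K) + sinh (s * K) / K * x := by
  obtain ⟨hx₁, hx₂⟩ := abs_le.mp hx
  have hconv := convexOn_exp.2 (Set.mem_univ (-(s * K))) (Set.mem_univ (s * K))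
    (div_nonneg (by linarith) (by positivity) : 0 ≤ (K - x) / (2 * K))
    (div_nonneg (by linarith) (by positivity) : 0 ≤ (K + x) / (2 * K))
    (by field_simp; ring)
  simp only [smul_eq_mul] at hconv
  calc exp (s * x) = exp ((K - x) / (2 * K) * -(s * K) + (K + x) / (2 * K) * (s * K)) := by
        congr 1; field_simp; ring
    _ ≤ _ := hconv
    _ = _ := by rw [cosh_eq, sinh_eq]; field_simp; ring

theorem MeasureTheory.Integrable.mul_exp_mul_of_abs_le {Ω : Type*} {mΩ : MeasurableSpace Ω}
    {μ : Measure Ω} {g e : Ω → ℝ} {K : ℝ} (hg : Integrable g μ) (he : AEStronglyMeasurable e μ)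
    (heK : ∀ᵐ ω ∂μ, |e ω| ≤ K) (s : ℝ) : Integrable (fun ω ↦ g ω * exp (s * e ω)) μ := by
  refine hg.mul_bdd (c := exp (|s| * K)) (by fun_prop) ?_
  filter_upwards [heK] with ω hω
  rw [norm_of_nonneg (exp_pos _).le, exp_le_exp]
  exact (le_abs_self _).trans (by rw [abs_mul]; gcongr)

section CondHoeffding

variable {Ω : Type*} {m mΩ : MeasurableSpace Ω} {μ : Measure Ω} {g e : Ω → ℝ}

theorem integral_mul_eq_zero_of_condExp_ae_eq_zero (hm : m ≤ mΩ) [SigmaFinite (μ.trim hm)]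
    (hg : StronglyMeasurable[m] g) (hge : Integrable (fun ω ↦ g ω * e ω) μ)
    (he : Integrable e μ) (he₀ : μ[e | m] =ᵐ[μ] 0) : ∫ ω, g ω * e ω ∂μ = 0 := by
  rw [← integral_condExp hm]
  refine integral_eq_zero_of_ae ?_
  filter_upwards [condExp_mul_of_stronglyMeasurable_left hg hge he, he₀] with ω h h₀
  change μ[g * e | m] ω = 0
  simp [h, h₀]

theorem integral_mul_exp_mul_le_of_condExp_ae_eq_zero [IsFiniteMeasure μ] (hm : m ≤ mΩ)
    {K : ℝ} (hK : 0 < K) (hg : StronglyMeasurable[m] g) (hg_int : Integrable g μ) (hg₀ : 0 ≤ g)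
    (he : AEStronglyMeasurable e μ) (heK : ∀ᵐ ω ∂μ, |e ω| ≤ K) (he₀ : μ[e | m] =ᵐ[μ] 0) (s : ℝ) :
    ∫ ω, g ω * exp (s * e ω) ∂μ ≤ exp (K ^ 2 * s ^ 2 / 2) * ∫ ω, g ω ∂μ := by
  have he_int : Integrable e μ := (integrable_const K).mono' he (by simpa using heK)
  have hge : Integrable (fun ω ↦ g ω * e ω) μ := hg_int.mul_bdd he (by simpa using heK)
  calc ∫ ω, g ω * exp (s * e ω) ∂μ
      ≤ ∫ ω, cosh (s * K) * g ω + sinh (s * K) / K * (g ω * e ω) ∂μ := by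
        refine integral_mono_ae (hg_int.mul_exp_mul_of_abs_le he heK s)
          ((hg_int.const_mul _).add (hge.const_mul _)) ?_
        filter_upwards [heK] with ω hω
        nlinarith [mul_le_mul_of_nonneg_left (exp_mul_le_cosh_add_sinh_div_mul s hK hω) (hg₀ ω)]
    _ = cosh (s * K) * ∫ ω, g ω ∂μ := by
        rw [integral_add (hg_int.const_mul _) (hge.const_mul _), integral_const_mul,
          integral_const_mul, integral_mul_eq_zero_of_condExp_ae_eq_zero hm hg hge he_int he₀,
          mul_zero, add_zero]
    _ ≤ exp (K ^ 2 * s ^ 2 / 2) * ∫ ω, g ω ∂μ := by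
        gcongr
        · exact integral_nonneg hg₀
        · exact (cosh_le_exp_half_sq _).trans_eq (by ring_nf)

end CondHoeffding

section SubgaussianVector

variable {Ω ι : Type*} [Fintype ι] {m mΩ : MeasurableSpace Ω} {μ : Measure Ω}
  {U : Ω → ι → ℝ} {β : ℝ≥0}

def HasSubgaussianMGFVec (U : Ω → ι → ℝ) (β : ℝ≥0) (μ : Measure Ω) : Prop :=
  ∀ θ : ι → ℝ, Integrable (fun ω ↦ exp (θ ⬝ᵥ U ω)) μ ∧
    ∫ ω, exp (θ ⬝ᵥ U ω) ∂μ ≤ exp (β * (θ ⬝ᵥ θ) / 2)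

/-- One step `u_t = u_{t-1} + (w_t - q_t) X_t` of the path-following algorithm, written in terms
of the pruning error `e = q_t - v_t`, since `w_t - v_t = -⟪u_{t-1}, X_t⟫ / (C ‖X_t‖²)`. -/
def pathUpdate (C : ℝ) (x : ι → ℝ) (e : ℝ) (U : ι → ℝ) : ι → ℝ :=
  U - (e + U ⬝ᵥ x / (C * (x ⬝ᵥ x))) • x

theorem dotProduct_pathUpdate (θ : ι → ℝ) (C e : ℝ) (x U : ι → ℝ) :
    θ ⬝ᵥ pathUpdate C x e U = (θ - (θ ⬝ᵥ x / (C * (x ⬝ᵥ x))) • x) ⬝ᵥ U - (θ ⬝ᵥ x) * e := by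
  simp only [pathUpdate, dotProduct_sub, sub_dotProduct, dotProduct_smul, smul_dotProduct,
    smul_eq_mul, dotProduct_comm x U]
  ring

theorem dotProduct_self_sub_div_smul {C : ℝ} (hC : C ≠ 0) {x : ι → ℝ} (hx : x ≠ 0) (θ : ι → ℝ) :
    (θ - (θ ⬝ᵥ x / (C * (x ⬝ᵥ x))) • x) ⬝ᵥ (θ - (θ ⬝ᵥ x / (C * (x ⬝ᵥ x))) • x) =
      θ ⬝ᵥ θ - (2 * C - 1) * (θ ⬝ᵥ x) ^ 2 / (C ^ 2 * (x ⬝ᵥ x)) := by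
  have hxx : x ⬝ᵥ x ≠ 0 := dotProduct_self_eq_zero.not.mpr hx
  simp only [dotProduct_sub, sub_dotProduct, dotProduct_smul, smul_dotProduct, smul_eq_mul,
    dotProduct_comm x θ]
  field_simp
  ring

namespace HasSubgaussianMGFVec

theorem zero [IsProbabilityMeasure μ] (β : ℝ≥0) : HasSubgaussianMGFVec (0 : Ω → ι → ℝ) β μ := by
  intro θ
  have hθ : 0 ≤ θ ⬝ᵥ θ := by simpa using dotProduct_self_star_nonneg θ
  exact ⟨by simp, by simpa using one_le_exp (by positivity : 0 ≤ (β : ℝ) * (θ ⬝ᵥ θ) / 2)⟩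

theorem hasSubgaussianMGF_apply (hU : HasSubgaussianMGFVec U β μ) (i : ι) :
    HasSubgaussianMGF (fun ω ↦ U ω i) β μ := by
  classical
  refine ⟨fun t ↦ ?_, fun t ↦ ?_⟩
  · simpa [single_dotProduct] using (hU (Pi.single i t)).1
  · simpa [mgf, single_dotProduct, sq] using (hU (Pi.single i t)).2

theorem one_sub_le_measureReal_norm_le [IsProbabilityMeasure μ] (hU : HasSubgaussianMGFVec U β μ)
    {ε : ℝ} (hε : 0 ≤ ε) :
    1 - 2 * Fintype.card ι * exp (-ε ^ 2 / (2 * β)) ≤ μ.real {ω | ‖U ω‖ ≤ ε} := by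
  have hcoord (i : ι) : μ.real {ω | ε < |U ω i|} ≤ 2 * exp (-ε ^ 2 / (2 * β)) :=
    calc μ.real {ω | ε < |U ω i|} ≤ μ.real ({ω | ε ≤ U ω i} ∪ {ω | ε ≤ -U ω i}) :=
          measureReal_mono fun ω (hω : ε < |U ω i|) ↦
            (lt_abs.mp hω).imp (fun h ↦ h.le) (fun h ↦ h.le)
      _ ≤ μ.real {ω | ε ≤ U ω i} + μ.real {ω | ε ≤ -U ω i} := measureReal_union_le _ _
      _ ≤ 2 * exp (-ε ^ 2 / (2 * β)) := by
          rw [two_mul]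
          exact add_le_add ((hU.hasSubgaussianMGF_apply i).measure_ge_le hε)
            ((hU.hasSubgaussianMGF_apply i).neg.measure_ge_le hε)
  have hbad : μ.real {ω | ‖U ω‖ ≤ ε}ᶜ ≤ 2 * Fintype.card ι * exp (-ε ^ 2 / (2 * β)) :=
    calc μ.real {ω | ‖U ω‖ ≤ ε}ᶜ ≤ μ.real (⋃ i, {ω | ε < |U ω i|}) := by
          refine measureReal_mono fun ω hω ↦ ?_
          simpa [pi_norm_le_iff_of_nonneg hε] using hω
      _ ≤ ∑ i, μ.real {ω | ε < |U ω i|} := measureReal_iUnion_fintype_le _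
      _ ≤ ∑ _i : ι, 2 * exp (-ε ^ 2 / (2 * β)) := Finset.sum_le_sum fun i _ ↦ hcoord i
      _ = 2 * Fintype.card ι * exp (-ε ^ 2 / (2 * β)) := by
          rw [Finset.sum_const, Finset.card_univ, nsmul_eq_mul]; ring
  have hsplit := measureReal_union_le (μ := μ) {ω | ‖U ω‖ ≤ ε} {ω | ‖U ω‖ ≤ ε}ᶜ
  rw [Set.union_compl_self, probReal_univ] at hsplit
  linarith

theorem pathUpdate [IsProbabilityMeasure μ] (hm : m ≤ mΩ)
    (hU : HasSubgaussianMGFVec U β μ) (hUm : Measurable[m] U) {e : Ω → ℝ} {K C : ℝ}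
    (hK : 0 < K) (hC : 1 / 2 < C) (he : AEStronglyMeasurable e μ) (heK : ∀ᵐ ω ∂μ, |e ω| ≤ K)
    (he₀ : μ[e | m] =ᵐ[μ] 0) {x : ι → ℝ} (hx : x ≠ 0)
    (hβ : K ^ 2 * C ^ 2 * (x ⬝ᵥ x) / (2 * C - 1) ≤ β) :
    HasSubgaussianMGFVec (fun ω ↦ _root_.pathUpdate C x (e ω) (U ω)) β μ := by
  intro θ
  set s := θ ⬝ᵥ x
  set θ' := θ - (s / (C * (x ⬝ᵥ x))) • x
  have hdecomp (ω : Ω) : exp (θ ⬝ᵥ _root_.pathUpdate C x (e ω) (U ω)) =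
      exp (θ' ⬝ᵥ U ω) * exp (-s * e ω) := by
    rw [← exp_add, neg_mul, ← sub_eq_add_neg]
    exact congrArg exp (dotProduct_pathUpdate θ C (e ω) x (U ω))
  obtain ⟨hint, hle⟩ := hU θ'
  have hg : StronglyMeasurable[m] fun ω ↦ exp (θ' ⬝ᵥ U ω) :=
    (by fun_prop : Measurable[m] fun ω ↦ exp (θ' ⬝ᵥ U ω)).stronglyMeasurable
  have hxx : 0 < x ⬝ᵥ x := by simpa using Matrix.dotProduct_self_star_pos_iff.mpr hx
  have hKβ : K ^ 2 * s ^ 2 ≤ β * ((2 * C - 1) * s ^ 2 / (C ^ 2 * (x ⬝ᵥ x))) := by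
    have : K ^ 2 ≤ β * (2 * C - 1) / (C ^ 2 * (x ⬝ᵥ x)) := by
      rw [div_le_iff₀ (by linarith)] at hβ
      rw [le_div_iff₀ (by positivity)]
      linarith
    calc K ^ 2 * s ^ 2 ≤ β * (2 * C - 1) / (C ^ 2 * (x ⬝ᵥ x)) * s ^ 2 := by gcongr
      _ = β * ((2 * C - 1) * s ^ 2 / (C ^ 2 * (x ⬝ᵥ x))) := by ring
  simp_rw [hdecomp]
  refine ⟨hint.mul_exp_mul_of_abs_le he heK _, ?_⟩
  calc ∫ ω, exp (θ' ⬝ᵥ U ω) * exp (-s * e ω) ∂μ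
      ≤ exp (K ^ 2 * (-s) ^ 2 / 2) * ∫ ω, exp (θ' ⬝ᵥ U ω) ∂μ :=
        integral_mul_exp_mul_le_of_condExp_ae_eq_zero hm hK hg hint (fun _ ↦ (exp_pos _).le)
          he heK he₀ _
    _ ≤ exp (K ^ 2 * (-s) ^ 2 / 2) * exp (β * (θ' ⬝ᵥ θ') / 2) := by gcongr
    _ ≤ exp (β * (θ ⬝ᵥ θ) / 2) := by
        rw [← exp_add, exp_le_exp, dotProduct_self_sub_div_smul (by linarith) hx]
        nlinarith

end HasSubgaussianMGFVec

end SubgaussianVector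

theorem min_one_two_mul_rpow_neg_pi_mul_le {N : ℕ} (hN : 1 ≤ N) {p : ℝ} (hp : 1 ≤ p) (m : ℕ) :
    min 1 (2 * m * (N : ℝ) ^ (-(π * p))) ≤ √2 * m * (N : ℝ) ^ (-p) := by
  have hsqrt2 : 1 ≤ √2 := one_le_sqrt.mpr one_le_two
  obtain rfl | hm := Nat.eq_zero_or_pos m
  · simp
  obtain rfl | hN₂ : N = 1 ∨ 2 ≤ N := by omega
  · have : (1 : ℝ) ≤ m := by exact_mod_cast hm
    simpa using (min_le_left _ _).trans (by nlinarith : (1 : ℝ) ≤ √2 * m)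
  refine min_le_of_right_le ?_
  have hN₀ : (0 : ℝ) < N := by positivity
  have hsmall : (N : ℝ) ^ (-((π - 1) * p)) ≤ 1 / 2 := by
    have h2 : (2 : ℝ) ≤ (N : ℝ) ^ ((π - 1) * p) :=
      calc (2 : ℝ) = 2 ^ (1 : ℝ) := (rpow_one 2).symm
        _ ≤ 2 ^ ((π - 1) * p) := rpow_le_rpow_of_exponent_le one_le_two (by nlinarith [pi_gt_three])
        _ ≤ (N : ℝ) ^ ((π - 1) * p) :=
            rpow_le_rpow zero_le_two (by exact_mod_cast hN₂) (by nlinarith [pi_gt_three])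
    rw [rpow_neg hN₀.le, one_div]
    exact inv_anti₀ two_pos h2
  calc 2 * m * (N : ℝ) ^ (-(π * p)) = 2 * m * (N : ℝ) ^ (-p) * (N : ℝ) ^ (-((π - 1) * p)) := by
        rw [mul_assoc _ ((N : ℝ) ^ _), ← rpow_add hN₀]; ring_nf
    _ ≤ 2 * m * (N : ℝ) ^ (-p) * (1 / 2) := by gcongr
    _ ≤ √2 * m * (N : ℝ) ^ (-p) := by
        have : 0 ≤ (m : ℝ) * (N : ℝ) ^ (-p) := by positivity
        nlinarith

theorem exp_neg_sq_div_le_rpow_neg_pi_mul {K C p M : ℝ} {N : ℕ} (hK : 0 < K) (hC : 1 ≤ C)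
    (hp : 0 ≤ p) (hM : 0 < M) (hN : 1 ≤ N) :
    exp (-(K * √(2 * C * π * p * log N) * √M) ^ 2 / (2 * (K ^ 2 * C ^ 2 / (2 * C - 1) * M))) ≤
      (N : ℝ) ^ (-(π * p)) := by
  have hlog : 0 ≤ log N := log_nonneg (by exact_mod_cast hN)
  have h2C : 0 < 2 * C - 1 := by linarith
  rw [rpow_def_of_pos (by positivity), exp_le_exp, mul_pow, mul_pow,
    sq_sqrt (by positivity), sq_sqrt hM.le]
  have key : (K ^ 2 * (2 * C * π * p * log N) * M) / (2 * (K ^ 2 * C ^ 2 / (2 * C - 1) * M)) =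
      π * p * log N * ((2 * C - 1) / C) := by
    field_simp
  have hratio : 1 ≤ (2 * C - 1) / C := by rw [le_div_iff₀ (by linarith)]; linarith
  rw [neg_div, key]
  nlinarith [le_mul_of_one_le_right (by positivity : 0 ≤ π * p * log N) hratio]

section PathFollowing

variable {Ω : Type*} {m : ℕ} {C : ℝ} {w : ℕ → ℝ} {X : ℕ → Fin m → ℝ} {q v : ℕ → Ω → ℝ}
  {u : ℕ → Ω → Fin m → ℝ} {past : ℕ → MeasurableSpace Ω}

theorem past_le [MeasurableSpace Ω] (hq : ∀ t, Measurable (q t))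
    (hpast : ∀ t, past t = ⨆ s ∈ Set.Ico 1 t, MeasurableSpace.comap (q s) inferInstance) (t : ℕ) :
    past t ≤ ‹MeasurableSpace Ω› := by
  rw [hpast t]
  exact iSup₂_le fun s _ ↦ (hq s).comap_le

theorem measurable_past_of_lt
    (hpast : ∀ t, past t = ⨆ s ∈ Set.Ico 1 t, MeasurableSpace.comap (q s) inferInstance)
    {s t : ℕ} (hs : 1 ≤ s) (hst : s < t) : Measurable[past t] (q s) := by
  rw [hpast t, measurable_iff_comap_le]
  exact le_iSup₂ (f := fun s (_ : s ∈ Set.Ico 1 t) ↦ MeasurableSpace.comap (q s) inferInstance)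
    s ⟨hs, hst⟩

theorem measurable_past_of_recursion (hu0 : u 0 = 0)
    (hu : ∀ t, 1 ≤ t → u t = fun ω ↦ u (t - 1) ω + (w t - q t ω) • X t)
    (hpast : ∀ t, past t = ⨆ s ∈ Set.Ico 1 t, MeasurableSpace.comap (q s) inferInstance)
    {s t : ℕ} (hst : s < t) : Measurable[past t] (u s) := by
  induction s with
  | zero => rw [hu0]; exact measurable_const
  | succ s ih =>
    have hq := measurable_past_of_lt hpast s.succ_pos hst
    have hus := ih (by omega)
    rw [hu (s + 1) s.succ_pos, Nat.add_sub_cancel]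
    fun_prop

theorem eq_pathUpdate_of_recursion
    (hv : ∀ t ω, v t ω = w t + (∑ j, u (t - 1) ω j * X t j) / (C * ∑ j, X t j ^ 2))
    (hu : ∀ t, 1 ≤ t → u t = fun ω ↦ u (t - 1) ω + (w t - q t ω) • X t) (t : ℕ) :
    u (t + 1) = fun ω ↦ pathUpdate C (X (t + 1)) (q (t + 1) ω - v (t + 1) ω) (u t ω) := by
  funext ω
  have hsq : ∑ j, X (t + 1) j ^ 2 = X (t + 1) ⬝ᵥ X (t + 1) := by simp [dotProduct, sq]
  rw [hu (t + 1) t.succ_pos, pathUpdate, hv, Nat.add_sub_cancel, hsq]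
  change _ = _ - (_ - (_ + u t ω ⬝ᵥ X (t + 1) / _) + _) • _
  module

theorem hasSubgaussianMGFVec_of_recursion [MeasurableSpace Ω] {μ : Measure Ω}
    [IsProbabilityMeasure μ] {N₀ : ℕ} {K : ℝ} {β : ℝ≥0} (hK : 0 < K) (hC : 1 / 2 < C)
    (hX : ∀ t, 1 ≤ t → t ≤ N₀ → X t ≠ 0) (hq : ∀ t, Measurable (q t)) (hu0 : u 0 = 0)
    (hv : ∀ t ω, v t ω = w t + (∑ j, u (t - 1) ω j * X t j) / (C * ∑ j, X t j ^ 2))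
    (hu : ∀ t, 1 ≤ t → u t = fun ω ↦ u (t - 1) ω + (w t - q t ω) • X t)
    (hbdd : ∀ t, 1 ≤ t → t ≤ N₀ → ∀ᵐ ω ∂μ, |q t ω - v t ω| ≤ K)
    (hpast : ∀ t, past t = ⨆ s ∈ Set.Ico 1 t, MeasurableSpace.comap (q s) inferInstance)
    (hmean : ∀ t, 1 ≤ t → t ≤ N₀ → μ[fun ω ↦ q t ω - v t ω | past t] =ᵐ[μ] 0)
    (hβ : ∀ t, 1 ≤ t → t ≤ N₀ → K ^ 2 * C ^ 2 * (X t ⬝ᵥ X t) / (2 * C - 1) ≤ β)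
    (t : ℕ) (ht : t ≤ N₀) : HasSubgaussianMGFVec (u t) β μ := by
  induction t with
  | zero => rw [hu0]; exact .zero β
  | succ t ih =>
    have hut := measurable_past_of_recursion hu0 hu hpast (Nat.lt_succ_self t)
    have hv_meas : Measurable (v (t + 1)) := by
      rw [funext (hv (t + 1)), Nat.add_sub_cancel]
      have := hut.mono (past_le hq hpast _) le_rfl
      fun_prop
    rw [eq_pathUpdate_of_recursion hv hu]
    exact (ih (by omega)).pathUpdate (past_le hq hpast _) hut hK hC
      ((hq _).sub hv_meas).aestronglyMeasurable (hbdd _ t.succ_pos ht)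
      (hmean _ t.succ_pos ht) (hX _ t.succ_pos ht) (hβ _ t.succ_pos ht)

end PathFollowing

theorem pruning_error_bound_general {m N₀ : ℕ} {Ω : Type*} [MeasurableSpace Ω]
    (μ : Measure Ω) [IsProbabilityMeasure μ]
    (hN₀ : 1 ≤ N₀) (C p K : ℝ) (hC : 1 ≤ C) (hp : 1 ≤ p) (hK : 0 < K)
    (w : ℕ → ℝ)
    (X : ℕ → Fin m → ℝ) (hX : ∀ t, 1 ≤ t → t ≤ N₀ → X t ≠ 0)
    (q : ℕ → Ω → ℝ) (hq : ∀ t, Measurable (q t))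
    (u : ℕ → Ω → Fin m → ℝ) (hu0 : u 0 = 0)
    (v : ℕ → Ω → ℝ)
    (hv : ∀ t ω, v t ω =
      w t + (∑ j, u (t - 1) ω j * X t j) / (C * ∑ j, X t j ^ 2))
    (hu : ∀ t, 1 ≤ t → u t = fun ω => u (t - 1) ω + (w t - q t ω) • X t)
    (hbdd : ∀ t, 1 ≤ t → t ≤ N₀ → ∀ᵐ ω ∂μ, |q t ω - v t ω| ≤ K)
    (past : ℕ → MeasurableSpace Ω)
    (hpast : ∀ t, past t = ⨆ s ∈ Set.Ico 1 t,
      MeasurableSpace.comap (q s) (inferInstance : MeasurableSpace ℝ))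
    (hmean : ∀ t, 1 ≤ t → t ≤ N₀ →
      μ[(fun ω => q t ω - v t ω) | past t] =ᵐ[μ] 0)
    (Mx : ℕ → ℝ)
    (hMx : ∀ t (ht : 1 ≤ t), Mx t =
      (Finset.Icc 1 t).sup' (Finset.nonempty_Icc.mpr ht) (fun i => ∑ j, X i j ^ 2)) :
    1 - Real.sqrt 2 * m * (N₀ : ℝ) ^ (-p) ≤
    (μ {ω | ‖u N₀ ω‖ ≤ K * Real.sqrt (2 * C * π * p * Real.log N₀) *
              Real.sqrt (Mx N₀)}).toReal := by
  have hXMx (t : ℕ) (h₁ : 1 ≤ t) (h₂ : t ≤ N₀) : X t ⬝ᵥ X t ≤ Mx N₀ := by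
    rw [hMx N₀ hN₀, show X t ⬝ᵥ X t = ∑ j, X t j ^ 2 by simp [dotProduct, sq]]
    exact Finset.le_sup' (fun i ↦ ∑ j, X i j ^ 2) (Finset.mem_Icc.mpr ⟨h₁, h₂⟩)
  have hMx₀ : 0 < Mx N₀ :=
    (by simpa using Matrix.dotProduct_self_star_pos_iff.mpr (hX 1 le_rfl hN₀) :
      0 < X 1 ⬝ᵥ X 1).trans_le (hXMx 1 le_rfl hN₀)
  have h2C : 0 < 2 * C - 1 := by linarith
  set β : ℝ≥0 := (K ^ 2 * C ^ 2 / (2 * C - 1) * Mx N₀).toNNReal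
  have hβ : (β : ℝ) = K ^ 2 * C ^ 2 / (2 * C - 1) * Mx N₀ := Real.coe_toNNReal _ (by positivity)
  have hsub := hasSubgaussianMGFVec_of_recursion hK (by linarith) hX hq hu0 hv hu hbdd hpast hmean
    (fun t h₁ h₂ ↦ by rw [hβ, mul_div_right_comm]; gcongr; exact hXMx t h₁ h₂) N₀ le_rfl
  set ε := K * √(2 * C * π * p * log N₀) * √(Mx N₀)
  have htail := hsub.one_sub_le_measureReal_norm_le (ε := ε) (by positivity)
  have hexp : exp (-ε ^ 2 / (2 * β)) ≤ (N₀ : ℝ) ^ (-(π * p)) :=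
    hβ ▸ exp_neg_sq_div_le_rpow_neg_pi_mul hK hC (by linarith) hMx₀ hN₀
  have hmin := min_one_two_mul_rpow_neg_pi_mul_le hN₀ hp m
  rw [Fintype.card_fin] at htail
  change _ ≤ μ.real _
  rcases min_cases 1 (2 * m * (N₀ : ℝ) ^ (-(π * p))) with ⟨h, -⟩ | ⟨h, -⟩
  · linarith [measureReal_nonneg (μ := μ) (s := {ω | ‖u N₀ ω‖ ≤ ε})]
  · nlinarith [mul_le_mul_of_nonneg_left hexp (by positivity : (0 : ℝ) ≤ 2 * m)]

/-- Single-neuron pruning error bound. Running the stochastic path-following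
algorithm with an unbiased stochastic pruning operator `S` satisfying
`|S(v) − v| ≤ K` a.s. (`u₀ = 0`, `q_t = S(w_t + ⟨u_{t−1}, X_t⟩/(C‖X_t‖²))`,
`u_t = u_{t−1} + (w_t − q_t) X_t`), we have
`P(‖Xw − Xq‖_∞ = ‖u_{N₀}‖_∞ ≤ K√(2Cπp log N₀)·max_{1≤i≤N₀}‖X_i‖) ≥ 1 − √2·m·N₀^{−p}`. -/
theorem pruning_error_bound {m N₀ : ℕ} {Ω : Type*} [MeasurableSpace Ω]
    (μ : Measure Ω) [IsProbabilityMeasure μ]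
    (hN₀ : 1 ≤ N₀) (C p K : ℝ) (hC : 1 ≤ C) (hp : 1 ≤ p) (hK : 0 < K)
    (w : ℕ → ℝ) (hw : ∀ t, 1 ≤ t → t ≤ N₀ → |w t| ≤ K)
    (X : ℕ → Fin m → ℝ) (hX : ∀ t, 1 ≤ t → t ≤ N₀ → X t ≠ 0)
    (q : ℕ → Ω → ℝ) (hq : ∀ t, Measurable (q t))
    (u : ℕ → Ω → Fin m → ℝ) (hu0 : u 0 = 0)
    (v : ℕ → Ω → ℝ)
    (hv : ∀ t ω, v t ω =
      w t + (∑ j, u (t - 1) ω j * X t j) / (C * ∑ j, X t j ^ 2))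
    (hu : ∀ t, 1 ≤ t → u t = fun ω => u (t - 1) ω + (w t - q t ω) • X t)
    (hbdd : ∀ t, 1 ≤ t → t ≤ N₀ → ∀ᵐ ω ∂μ, |q t ω - v t ω| ≤ K)
    (past : ℕ → MeasurableSpace Ω)
    (hpast : ∀ t, past t = ⨆ s ∈ Set.Ico 1 t,
      MeasurableSpace.comap (q s) (inferInstance : MeasurableSpace ℝ))
    (hmean : ∀ t, 1 ≤ t → t ≤ N₀ →
      μ[(fun ω => q t ω - v t ω) | past t] =ᵐ[μ] 0)
    (Mx : ℕ → ℝ)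
    (hMx : ∀ t (ht : 1 ≤ t), Mx t =
      (Finset.Icc 1 t).sup' (Finset.nonempty_Icc.mpr ht) (fun i => ∑ j, X i j ^ 2)) :
    1 - Real.sqrt 2 * m * (N₀ : ℝ) ^ (-p) ≤
    (μ {ω | ‖u N₀ ω‖ ≤ K * Real.sqrt (2 * C * π * p * Real.log N₀) *
              Real.sqrt (Mx N₀)}).toReal :=
  pruning_error_bound_general μ hN₀ C p K hC hp hK w X hX q hq u hu0 v hv hu hbdd past hpast hmean
    Mx hMx
end
end
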